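/- arXiv:1904.00709 — 12 statements merged into one kernel-verified Lean document; each statement's English description precedes it below -/
import Mathlib

section
/- Let V be a real normed vector space, let k ≥ 0, let F : V → ℝ be a C^∞ function, and let S ⊆ V be a set such that for every m ∈ S and every j with 0 ≤ j ≤ k the j-th iterated Fréchet derivative of F vanishes at m. Then for any m ∈ S the value of the iterated directional derivative (X₁·(X₂·(⋯(X_{k+1}·F))))(m) depends only on the values X₁(m), …, X_{k+1}(m): if Y₁, …, Y_{k+1} : V → V are C^∞ vector fields with X_i(m) = Y_i(m) for all i, then (X₁·(⋯(X_{k+1}·F)))(m) = (Y₁·(⋯(Y_{k+1}·F)))(m). -/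
/-!
Differentiating `p ↦ DʲF(p)(w₁(p), …, wⱼ(p))` along `X` gives, by the Leibniz rule,
`Dʲ⁺¹F(X, w₁, …, wⱼ)` plus terms of the same shape and order `j`. By induction,
`X₁·(⋯(Xₙ·F))` is `DⁿF(X₁, …, Xₙ)` modulo the span of such terms of order `< n` with smooth
fields, and all of these vanish at a point where `D⁰F, …, Dⁿ⁻¹F` vanish.
-/

/-- Directional derivative of `g : V → ℝ` along the vector field `X : V → V`:
`(X·g)(p) = Dg(p)(X(p))`. -/
noncomputable def dirDeriv {V : Type*} [NormedAddCommGroup V] [NormedSpace ℝ V]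
    (X : V → V) (g : V → ℝ) : V → ℝ :=
  fun p => fderiv ℝ g p (X p)

/-- Iterated directional derivative: `dirDerivList [X₁, …, Xₙ] g = X₁·(X₂·(⋯(Xₙ·g)))`. -/
noncomputable def dirDerivList {V : Type*} [NormedAddCommGroup V] [NormedSpace ℝ V] :
    List (V → V) → (V → ℝ) → (V → ℝ)
  | [], g => g
  | X :: L, g => dirDeriv X (dirDerivList L g)

open Function
open scoped ContDiff

section IteratedDirDeriv

variable {V : Type*} [NormedAddCommGroup V] [NormedSpace ℝ V]

lemma dirDeriv_zero (X : V → V) : dirDeriv X (0 : V → ℝ) = 0 := by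
  funext p
  simp [dirDeriv]

lemma dirDeriv_add (X : V → V) {f g : V → ℝ} (hf : Differentiable ℝ f)
    (hg : Differentiable ℝ g) : dirDeriv X (f + g) = dirDeriv X f + dirDeriv X g := by
  funext p
  simp [dirDeriv, fderiv_add (hf p) (hg p)]

lemma dirDeriv_smul (X : V → V) (c : ℝ) (f : V → ℝ) :
    dirDeriv X (c • f) = c • dirDeriv X f := by
  funext p
  simp [dirDeriv, fderiv_const_smul_field]

noncomputable def iteratedFDerivApply (F : V → ℝ) {j : ℕ} (w : Fin j → V → V) : V → ℝ :=
  fun p => iteratedFDeriv ℝ j F p (fun i => w i p)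

variable {F : V → ℝ}

lemma hasFDerivAt_iteratedFDerivApply (hF : ContDiff ℝ ∞ F) {j : ℕ} {w : Fin j → V → V}
    {p : V} (hw : ∀ i, DifferentiableAt ℝ (w i) p) :
    HasFDerivAt (iteratedFDerivApply F w)
      (ContinuousMultilinearMap.apply ℝ _ ℝ (w · p) ∘L fderiv ℝ (iteratedFDeriv ℝ j F) p +
        ∑ i, (iteratedFDeriv ℝ j F p).toContinuousLinearMap (w · p) i ∘L fderiv ℝ (w i) p) p :=
  (hF.differentiable_iteratedFDeriv (by exact_mod_cast ENat.natCast_lt_top j) p).hasFDerivAt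
    |>.continuousMultilinearMap_apply fun i => (hw i).hasFDerivAt

lemma differentiable_iteratedFDerivApply (hF : ContDiff ℝ ∞ F) {j : ℕ} {w : Fin j → V → V}
    (hw : ∀ i, Differentiable ℝ (w i)) : Differentiable ℝ (iteratedFDerivApply F w) :=
  fun p => (hasFDerivAt_iteratedFDerivApply hF fun i => hw i p).differentiableAt

lemma dirDeriv_iteratedFDerivApply (hF : ContDiff ℝ ∞ F) {j : ℕ} {w : Fin j → V → V}
    (hw : ∀ i, Differentiable ℝ (w i)) (X : V → V) :
    dirDeriv X (iteratedFDerivApply F w) =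
      iteratedFDerivApply F (Fin.cons X w) +
        ∑ i, iteratedFDerivApply F (update w i fun q => fderiv ℝ (w i) q (X q)) := by
  funext p
  have hupdate : ∀ i, (fun i' => update w i (fun q => fderiv ℝ (w i) q (X q)) i' p) =
      update (w · p) i (fderiv ℝ (w i) p (X p)) :=
    fun i => funext fun i' => apply_update (fun _ g => g p) w i _ i'
  simp [dirDeriv, (hasFDerivAt_iteratedFDerivApply hF fun i => hw i p).fderiv,
    iteratedFDerivApply, iteratedFDeriv_succ_apply_left, Fin.tail_def, hupdate]

noncomputable def lowerOrderTerms (F : V → ℝ) (n : ℕ) : Submodule ℝ (V → ℝ) :=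
  Submodule.span ℝ
    {g | ∃ j < n, ∃ w : Fin j → V → V, (∀ i, ContDiff ℝ ∞ (w i)) ∧ iteratedFDerivApply F w = g}

lemma iteratedFDerivApply_mem_lowerOrderTerms {n j : ℕ} (hj : j < n) {w : Fin j → V → V}
    (hw : ∀ i, ContDiff ℝ ∞ (w i)) : iteratedFDerivApply F w ∈ lowerOrderTerms F n :=
  Submodule.subset_span ⟨j, hj, w, hw, rfl⟩

lemma differentiable_of_mem_lowerOrderTerms (hF : ContDiff ℝ ∞ F) {n : ℕ} {g : V → ℝ}
    (hg : g ∈ lowerOrderTerms F n) : Differentiable ℝ g := by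
  induction hg using Submodule.span_induction with
  | mem g hg =>
    obtain ⟨j, -, w, hw, rfl⟩ := hg
    exact differentiable_iteratedFDerivApply hF fun i => (hw i).differentiable (by simp)
  | zero => exact differentiable_const 0
  | add f g _ _ hf hg => exact hf.add hg
  | smul c f _ hf => exact hf.const_smul c

lemma apply_eq_zero_of_mem_lowerOrderTerms {n : ℕ} {m : V}
    (hm : ∀ j < n, iteratedFDeriv ℝ j F m = 0) {g : V → ℝ} (hg : g ∈ lowerOrderTerms F n) :
    g m = 0 := by
  suffices lowerOrderTerms F n ≤ LinearMap.ker (LinearMap.proj m) from this hg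
  refine Submodule.span_le.mpr ?_
  rintro _ ⟨j, hj, w, -, rfl⟩
  simp [iteratedFDerivApply, hm j hj]

lemma lowerOrderTerms_mono : Monotone (lowerOrderTerms F) := fun _ _ hnn' =>
  Submodule.span_mono fun _ ⟨j, hj, w, hw, hg⟩ => ⟨j, hj.trans_le hnn', w, hw, hg⟩

lemma dirDeriv_iteratedFDerivApply_sub_mem_lowerOrderTerms (hF : ContDiff ℝ ∞ F) {X : V → V}
    (hX : ContDiff ℝ ∞ X) {j : ℕ} {w : Fin j → V → V} (hw : ∀ i, ContDiff ℝ ∞ (w i)) :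
    dirDeriv X (iteratedFDerivApply F w) - iteratedFDerivApply F (Fin.cons X w) ∈
      lowerOrderTerms F (j + 1) := by
  rw [dirDeriv_iteratedFDerivApply hF (fun i => (hw i).differentiable (by simp)),
    add_sub_cancel_left]
  refine Submodule.sum_mem _ fun i _ =>
    iteratedFDerivApply_mem_lowerOrderTerms j.lt_succ_self fun i' => ?_
  rcases eq_or_ne i' i with rfl | hne
  · simpa using ((hw i').fderiv_right (m := ∞) le_rfl).clm_apply hX
  · simpa [hne] using hw i'

lemma dirDeriv_mem_lowerOrderTerms (hF : ContDiff ℝ ∞ F) {X : V → V} (hX : ContDiff ℝ ∞ X)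
    {n : ℕ} {g : V → ℝ} (hg : g ∈ lowerOrderTerms F n) :
    dirDeriv X g ∈ lowerOrderTerms F (n + 1) := by
  induction hg using Submodule.span_induction with
  | mem g hg =>
    obtain ⟨j, hj, w, hw, rfl⟩ := hg
    rw [← sub_add_cancel (dirDeriv X _) (iteratedFDerivApply F (Fin.cons X w))]
    exact add_mem
      (lowerOrderTerms_mono (by omega)
        (dirDeriv_iteratedFDerivApply_sub_mem_lowerOrderTerms hF hX hw))
      (iteratedFDerivApply_mem_lowerOrderTerms (by omega) (Fin.cases hX hw))
  | zero => simp [dirDeriv_zero]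
  | add f g hf hg hXf hXg =>
    rw [dirDeriv_add X (differentiable_of_mem_lowerOrderTerms hF hf)
      (differentiable_of_mem_lowerOrderTerms hF hg)]
    exact add_mem hXf hXg
  | smul c f _ hXf =>
    rw [dirDeriv_smul]
    exact Submodule.smul_mem _ c hXf

lemma dirDerivList_sub_iteratedFDerivApply_mem_lowerOrderTerms (hF : ContDiff ℝ ∞ F) {n : ℕ}
    {W : Fin n → V → V} (hW : ∀ i, ContDiff ℝ ∞ (W i)) :
    dirDerivList (List.ofFn W) F - iteratedFDerivApply F W ∈ lowerOrderTerms F n := by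
  induction n with
  | zero =>
    convert (lowerOrderTerms F 0).zero_mem
    funext p
    simp [dirDerivList, iteratedFDerivApply]
  | succ n ih =>
    have hW' : ∀ i, ContDiff ℝ ∞ (Fin.tail W i) := fun i => hW i.succ
    set r := dirDerivList (List.ofFn (Fin.tail W)) F - iteratedFDerivApply F (Fin.tail W)
    have hr : r ∈ lowerOrderTerms F n := ih hW'
    have hsplit : dirDerivList (List.ofFn W) F =
        dirDeriv (W 0) (iteratedFDerivApply F (Fin.tail W) + r) := by
      rw [add_sub_cancel, List.ofFn_succ]
      rfl
    rw [hsplit, dirDeriv_add _ (differentiable_iteratedFDerivApply hF fun i =>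
      (hW' i).differentiable (by simp)) (differentiable_of_mem_lowerOrderTerms hF hr),
      add_sub_right_comm]
    refine add_mem ?_ (dirDeriv_mem_lowerOrderTerms hF (hW 0) hr)
    simpa using dirDeriv_iteratedFDerivApply_sub_mem_lowerOrderTerms hF (hW 0) hW'

lemma dirDerivList_apply_eq_iteratedFDeriv (hF : ContDiff ℝ ∞ F) {n : ℕ} {W : Fin n → V → V}
    (hW : ∀ i, ContDiff ℝ ∞ (W i)) {m : V} (hm : ∀ j < n, iteratedFDeriv ℝ j F m = 0) :
    dirDerivList (List.ofFn W) F m = iteratedFDeriv ℝ n F m (W · m) :=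
  sub_eq_zero.mp (apply_eq_zero_of_mem_lowerOrderTerms hm
    (dirDerivList_sub_iteratedFDerivApply_mem_lowerOrderTerms hF hW))

end IteratedDirDeriv

/-- If `F` is `C^∞` and all its iterated Fréchet derivatives of order `≤ k` vanish on `S`,
then the `(k+1)`-fold iterated directional derivative of `F` at a point `m ∈ S` depends
only on the values of the vector fields at `m`. -/
theorem iterated_dirDeriv_tensorial
    {V : Type*} [NormedAddCommGroup V] [NormedSpace ℝ V]
    (k : ℕ) (F : V → ℝ) (hF : ContDiff ℝ (⊤ : ℕ∞) F) (S : Set V)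
    (hS : ∀ m ∈ S, ∀ j ≤ k, iteratedFDeriv ℝ j F m = 0)
    (X Y : Fin (k + 1) → V → V)
    (hX : ∀ i, ContDiff ℝ (⊤ : ℕ∞) (X i)) (hY : ∀ i, ContDiff ℝ (⊤ : ℕ∞) (Y i))
    (m : V) (hm : m ∈ S) (hXY : ∀ i, X i m = Y i m) :
    dirDerivList (List.ofFn X) F m = dirDerivList (List.ofFn Y) F m := by
  have hFm : ∀ j < k + 1, iteratedFDeriv ℝ j F m = 0 := fun j hj =>
    hS m hm j (Nat.lt_succ_iff.mp hj)
  rw [dirDerivList_apply_eq_iteratedFDeriv hF hX hFm,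
    dirDerivList_apply_eq_iteratedFDeriv hF hY hFm, funext hXY]
end

section
/- Let V be a real normed vector space, let k ≥ 0, and let F : V × V → ℝ be a C^∞ function such that for every x ∈ V and every j with 0 ≤ j ≤ k the j-th iterated Fréchet derivative of F vanishes at the diagonal point (x,x). Then the (k+1)-st Fréchet derivative of F at any diagonal point annihilates vectors tangent to the diagonal: for every x, u ∈ V and every ξ₂, …, ξ_{k+1} ∈ V × V one has D^{k+1}F(x,x)((u,u), ξ₂, …, ξ_{k+1}) = 0. -/
theorem fderiv_apply_diag_eq_zero_of_const_on_diag {𝕜 E G : Type*} [NontriviallyNormedField 𝕜]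
    [NormedAddCommGroup E] [NormedSpace 𝕜 E] [NormedAddCommGroup G] [NormedSpace 𝕜 G]
    {f : E × E → G} {c : G} {x : E} (hf : DifferentiableAt 𝕜 f (x, x))
    (hconst : ∀ y, f (y, y) = c) (u : E) :
    fderiv 𝕜 f (x, x) (u, u) = 0 := by
  have hdiag : HasFDerivAt (fun y => f (y, y))
      ((fderiv 𝕜 f (x, x)).comp
        ((ContinuousLinearMap.id 𝕜 E).prod (ContinuousLinearMap.id 𝕜 E)))
      x :=
    hf.hasFDerivAt.comp (f := fun y => (y, y)) x
      ((hasFDerivAt_id x).prodMk (hasFDerivAt_id x))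
  rw [show (fun y => f (y, y)) = fun _ => c from funext hconst] at hdiag
  simpa using congrArg (· u) (hdiag.unique (hasFDerivAt_const c x))

/-- If all iterated Fréchet derivatives of `F : V × V → ℝ` of order `≤ k` vanish on the
diagonal, then the `(k+1)`-st derivative at a diagonal point annihilates vectors tangent
to the diagonal, i.e. vectors of the form `(u, u)`. -/
theorem iteratedFDeriv_diag_vanishes_on_diagonal_tangent
    {V : Type*} [NormedAddCommGroup V] [NormedSpace ℝ V]
    (k : ℕ) (F : V × V → ℝ) (hF : ContDiff ℝ (⊤ : ℕ∞) F)
    (hvanish : ∀ x : V, ∀ j ≤ k, iteratedFDeriv ℝ j F (x, x) = 0)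
    (x u : V) (ξ : Fin k → V × V) :
    iteratedFDeriv ℝ (k + 1) F (x, x) (Fin.cons (u, u) ξ) = 0 := by
  have hdiff : DifferentiableAt ℝ (iteratedFDeriv ℝ k F) (x, x) :=
    (hF.differentiable_iteratedFDeriv (by exact_mod_cast WithTop.coe_lt_top k)) (x, x)
  have htangent : fderiv ℝ (iteratedFDeriv ℝ k F) (x, x) (u, u) = 0 :=
    fderiv_apply_diag_eq_zero_of_const_on_diag hdiff (fun y => hvanish y k le_rfl) u
  rw [iteratedFDeriv_succ_apply_left, Fin.cons_zero, htangent]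
  rfl
end

section
/- Let V be a real normed vector space and let F : V × V → ℝ be a contrast function. Then for every x, u, v ∈ V the second Fréchet derivative of F at the diagonal satisfies D²F(x,x)((u,0),(v,0)) = D²F(x,x)((0,u),(0,v)) = −D²F(x,x)((u,0),(0,v)). -/
/-!
Differentiating `DF(y, y) = 0` along the diagonal shows that `B = D²F(x, x)` kills `(w, w)`, so
`B (w, 0) = -B (0, w)`. Combined with the symmetry of `B`, moving the `0`-padded vectors from one
slot to the other gives both relations.
-/

section

variable {𝕜 E G : Type*} [NontriviallyNormedField 𝕜] [NormedAddCommGroup E] [NormedSpace 𝕜 E]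
  [NormedAddCommGroup G] [NormedSpace 𝕜 G]

theorem fderiv_apply_diag_eq_zero {g : E × E → G} {c : G} (hg : ∀ y, g (y, y) = c) {x : E}
    (hgx : DifferentiableAt 𝕜 g (x, x)) (w : E) :
    fderiv 𝕜 g (x, x) (w, w) = 0 := by
  have hcomp : HasFDerivAt (fun y : E => g (y, y))
      ((fderiv 𝕜 g (x, x)).comp ((ContinuousLinearMap.id 𝕜 E).prod (ContinuousLinearMap.id 𝕜 E)))
      x :=
    hgx.hasFDerivAt.comp (f := fun y : E => (y, y)) x
      ((hasFDerivAt_id x).prodMk (hasFDerivAt_id x))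
  have hconst : HasFDerivAt (fun y : E => g (y, y)) (0 : E →L[𝕜] G) x := by
    simpa only [hg] using hasFDerivAt_const c x
  simpa using congrArg (· w) (hcomp.unique hconst)

namespace ContinuousLinearMap

variable {B : E × E →L[𝕜] E × E →L[𝕜] G}

theorem apply_inl_eq_neg_apply_inr (hB : ∀ w, B (w, w) = 0) (a : E) : B (a, 0) = -B (0, a) := by
  refine eq_neg_of_add_eq_zero_left ?_
  rw [← map_add, Prod.mk_add_mk, add_zero, zero_add, hB]

variable (hB : ∀ w, B (w, w) = 0) (hsymm : ∀ a b, B a b = B b a)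
include hB hsymm

theorem apply_inl_inl_eq_apply_inr_inr (u v : E) : B (u, 0) (v, 0) = B (0, u) (0, v) := by
  calc B (u, 0) (v, 0) = -B (0, u) (v, 0) := by rw [apply_inl_eq_neg_apply_inr hB, neg_apply]
    _ = -B (v, 0) (0, u) := by rw [hsymm]
    _ = B (0, v) (0, u) := by rw [apply_inl_eq_neg_apply_inr hB, neg_apply, neg_neg]
    _ = B (0, u) (0, v) := hsymm _ _

theorem apply_inl_inl_eq_neg_apply_inl_inr (u v : E) : B (u, 0) (v, 0) = -B (u, 0) (0, v) := by
  calc B (u, 0) (v, 0) = B (v, 0) (u, 0) := hsymm _ _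
    _ = -B (0, v) (u, 0) := by rw [apply_inl_eq_neg_apply_inr hB, neg_apply]
    _ = -B (u, 0) (0, v) := by rw [hsymm]

end ContinuousLinearMap

end

theorem contrast_secondDeriv_relations_general
    {V : Type*} [NormedAddCommGroup V] [NormedSpace ℝ V]
    (F : V × V → ℝ) (hF : ContDiff ℝ (⊤ : ℕ∞) F)
    (hdF : ∀ x : V, fderiv ℝ F (x, x) = 0)
    (x u v : V) :
    iteratedFDeriv ℝ 2 F (x, x) ![(u, 0), (v, 0)]
        = iteratedFDeriv ℝ 2 F (x, x) ![(0, u), (0, v)] ∧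
      iteratedFDeriv ℝ 2 F (x, x) ![(u, 0), (v, 0)]
        = -iteratedFDeriv ℝ 2 F (x, x) ![(u, 0), (0, v)] := by
  have hF2 : ContDiff ℝ 2 F := hF.of_le (WithTop.coe_le_coe.mpr le_top)
  have hdiff : Differentiable ℝ (fderiv ℝ F) :=
    (hF2.fderiv_right (m := 1) le_rfl).differentiable one_ne_zero
  have hsymm : IsSymmSndFDerivAt ℝ F (x, x) :=
    hF2.contDiffAt.isSymmSndFDerivAt (by simp)
  have hdiag (w : V) : fderiv ℝ (fderiv ℝ F) (x, x) (w, w) = 0 :=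
    fderiv_apply_diag_eq_zero hdF (hdiff _) w
  simp only [iteratedFDeriv_two_apply, Matrix.cons_val_zero, Matrix.cons_val_one]
  exact ⟨ContinuousLinearMap.apply_inl_inl_eq_apply_inr_inr hdiag hsymm u v,
    ContinuousLinearMap.apply_inl_inl_eq_neg_apply_inl_inr hdiag hsymm u v⟩

/-- For a contrast function `F` on the pair groupoid `V × V` (a `C^∞` function vanishing
on the diagonal together with its first derivative), the second derivative at a diagonal
point satisfies `D²F(x,x)((u,0),(v,0)) = D²F(x,x)((0,u),(0,v)) = −D²F(x,x)((u,0),(0,v))`. -/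
theorem contrast_secondDeriv_relations
    {V : Type*} [NormedAddCommGroup V] [NormedSpace ℝ V]
    (F : V × V → ℝ) (hF : ContDiff ℝ (⊤ : ℕ∞) F)
    (hF0 : ∀ x : V, F (x, x) = 0) (hdF : ∀ x : V, fderiv ℝ F (x, x) = 0)
    (x u v : V) :
    iteratedFDeriv ℝ 2 F (x, x) ![(u, 0), (v, 0)]
        = iteratedFDeriv ℝ 2 F (x, x) ![(0, u), (0, v)] ∧
      iteratedFDeriv ℝ 2 F (x, x) ![(u, 0), (v, 0)]
        = -iteratedFDeriv ℝ 2 F (x, x) ![(u, 0), (0, v)] :=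
  contrast_secondDeriv_relations_general F hF hdF x u v
end

section
/- Let V be a real normed vector space and let F : V × V → ℝ be a contrast function. Define F* : V × V → ℝ by F*(x,y) := F(y,x). Then F* is also a contrast function (F*(x,x) = 0 and DF*(x,x) = 0 for all x), and the induced metric tensors coincide: for all x, u, v ∈ V, D²F*(x,x)((0,u),(0,v)) = D²F(x,x)((0,u),(0,v)). -/
/-!
`F*` is `F ∘ swap`, so `D²F*(x,x)((0,u),(0,v)) = D²F(x,x)((u,0),(v,0))`, and it remains to compare
the horizontal and vertical components of `B = D²F(x,x)`. Differentiating `DF(y,y) = 0` along the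
diagonal gives `B(z,z) = 0`, hence `B(u,0) = -B(0,u)`; using this twice together with the symmetry
of `B` yields `B(u,0)(v,0) = B(0,v)(0,u) = B(0,u)(0,v)`.
-/

section

variable {𝕜 : Type*} [NontriviallyNormedField 𝕜]
  {E : Type*} [NormedAddCommGroup E] [NormedSpace 𝕜 E]
  {F : Type*} [NormedAddCommGroup F] [NormedSpace 𝕜 F]

theorem iteratedFDeriv_comp_swap_apply (f : E × E → F) (p : E × E) {n : ℕ}
    (m : Fin n → E × E) :
    iteratedFDeriv 𝕜 n (fun q => f q.swap) p m =
      iteratedFDeriv 𝕜 n f p.swap (fun i => (m i).swap) := by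
  have h := (ContinuousLinearEquiv.prodComm 𝕜 E E).iteratedFDerivWithin_comp_right f
    uniqueDiffOn_univ (Set.mem_univ p.swap) n
  simp only [Set.preimage_univ, iteratedFDerivWithin_univ] at h
  exact congr($h m)

theorem fderiv_apply_diag_eq_zero_of_diag_eq_zero {G : E × E → F} {x : E}
    (hG : DifferentiableAt 𝕜 G (x, x)) (h : ∀ y, G (y, y) = 0) (z : E) :
    fderiv 𝕜 G (x, x) (z, z) = 0 := by
  have hcomp := hG.hasFDerivAt.comp x (f := fun y => (y, y))
    ((hasFDerivAt_id x).prodMk (hasFDerivAt_id x))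
  have hconst : (fun y => G (y, y)) = fun _ => 0 := funext h
  have hzero := hcomp.unique (hconst ▸ hasFDerivAt_const (0 : F) x)
  exact congr($hzero z)

theorem ContinuousLinearMap.apply_inl_inl_eq_apply_inr_inr_s5 {B : E × E →L[𝕜] E × E →L[𝕜] F}
    (hsymm : ∀ a b, B a b = B b a) (hdiag : ∀ z, B (z, z) = 0) (u v : E) :
    B (u, 0) (v, 0) = B (0, u) (0, v) := by
  have hflip (w : E) : B (w, 0) = -B (0, w) := by
    rw [show ((w, 0) : E × E) = (w, w) - (0, w) by simp, map_sub, hdiag, zero_sub]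
  calc B (u, 0) (v, 0) = -B (0, u) (v, 0) := by rw [hflip]; rfl
    _ = -B (v, 0) (0, u) := by rw [hsymm]
    _ = B (0, v) (0, u) := by rw [hflip, neg_apply, neg_neg]
    _ = B (0, u) (0, v) := hsymm _ _

end

theorem fderiv_fderiv_inl_inl_eq_inr_inr_of_fderiv_diag_eq_zero
    {𝕜 : Type*} [RCLike 𝕜]
    {E : Type*} [NormedAddCommGroup E] [NormedSpace 𝕜 E]
    {F : Type*} [NormedAddCommGroup F] [NormedSpace 𝕜 F]
    {f : E × E → F} {x : E} (hf : ContDiffAt 𝕜 2 f (x, x))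
    (hdf : ∀ y, fderiv 𝕜 f (y, y) = 0) (u v : E) :
    fderiv 𝕜 (fderiv 𝕜 f) (x, x) (u, 0) (v, 0) = fderiv 𝕜 (fderiv 𝕜 f) (x, x) (0, u) (0, v) := by
  have hdiff : DifferentiableAt 𝕜 (fderiv 𝕜 f) (x, x) :=
    (hf.fderiv_right (m := 1) le_rfl).differentiableAt one_ne_zero
  exact ContinuousLinearMap.apply_inl_inl_eq_apply_inr_inr_s5 (hf.isSymmSndFDerivAt (by simp))
    (fderiv_apply_diag_eq_zero_of_diag_eq_zero hdiff hdf) u v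

/-- If `F` is a contrast function on the pair groupoid `V × V`, then so is
`F* = F ∘ inv`, where `inv(x,y) = (y,x)`, and the induced metric tensors coincide:
`g^{F*} = g^F`. -/
theorem contrast_inv_is_contrast_and_same_metric
    {V : Type*} [NormedAddCommGroup V] [NormedSpace ℝ V]
    (F : V × V → ℝ) (hF : ContDiff ℝ (⊤ : ℕ∞) F)
    (hF0 : ∀ x : V, F (x, x) = 0) (hdF : ∀ x : V, fderiv ℝ F (x, x) = 0) :
    ContDiff ℝ (⊤ : ℕ∞) (fun p : V × V => F (p.2, p.1)) ∧
      (∀ x : V, (fun p : V × V => F (p.2, p.1)) (x, x) = 0) ∧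
      (∀ x : V, fderiv ℝ (fun p : V × V => F (p.2, p.1)) (x, x) = 0) ∧
      (∀ x u v : V,
        iteratedFDeriv ℝ 2 (fun p : V × V => F (p.2, p.1)) (x, x) ![(0, u), (0, v)]
          = iteratedFDeriv ℝ 2 F (x, x) ![(0, u), (0, v)]) := by
  refine ⟨hF.comp (contDiff_snd.prodMk contDiff_fst), hF0, fun x => ?_, fun x u v => ?_⟩
  · have h := (ContinuousLinearEquiv.prodComm ℝ V V).comp_right_fderiv (f := F) (x := (x, x))
    rwa [ContinuousLinearEquiv.prodComm_apply, Prod.swap_prod_mk, hdF,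
      ContinuousLinearMap.zero_comp] at h
  · calc iteratedFDeriv ℝ 2 (fun p : V × V => F (p.2, p.1)) (x, x) ![(0, u), (0, v)]
        = iteratedFDeriv ℝ 2 F (x, x) ![(u, 0), (v, 0)] := by
          rw [show (fun p : V × V => F (p.2, p.1)) = fun p => F p.swap from rfl,
            iteratedFDeriv_comp_swap_apply]
          congr 1
          ext i : 1
          fin_cases i <;> rfl
      _ = fderiv ℝ (fderiv ℝ F) (x, x) (u, 0) (v, 0) :=
          iteratedFDeriv_two_apply F (x, x) ![(u, 0), (v, 0)]
      _ = fderiv ℝ (fderiv ℝ F) (x, x) (0, u) (0, v) :=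
          fderiv_fderiv_inl_inl_eq_inr_inr_of_fderiv_diag_eq_zero
            (hF.contDiffAt.of_le (by norm_cast)) hdF u v
      _ = iteratedFDeriv ℝ 2 F (x, x) ![(0, u), (0, v)] :=
          (iteratedFDeriv_two_apply F (x, x) ![(0, u), (0, v)]).symm
end

section
/- Let V be a real normed vector space, let k ≥ 0, and let F : V × V → ℝ be a C^∞ function such that for every x ∈ V and every j with 0 ≤ j ≤ k the j-th iterated Fréchet derivative of F vanishes at (x,x). Define G : V × V → ℝ by G(x,y) := F(x,y) + (−1)^k · F(y,x). Then for every x ∈ V and every j with 0 ≤ j ≤ k+1 the j-th iterated Fréchet derivative of G vanishes at (x,x). -/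
/-!
Let `D` be the `(k+1)`-st derivative of `F` at a diagonal point. Since the `k`-th derivative
vanishes along the diagonal, differentiating it in a diagonal direction gives `D m = 0` as soon as
the first argument of `m` is diagonal, and by the symmetry of `D` as soon as any argument is.
Splitting every argument into its diagonal and antidiagonal parts, `D m` only sees the
antidiagonal parts, on which the swap acts by `-1`; hence `D (swap ∘ m) = (-1)^(k+1) D m`, which
is exactly the cancellation in `F + (-1)^k F ∘ swap`. Derivatives of lower order vanish
termwise.
-/

open Fin

theorem MultilinearMap.map_add_eq_of_forall_mem {R ι M N : Type*} [CommSemiring R] [Fintype ι]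
    [AddCommMonoid M] [Module R M] [AddCommMonoid N] [Module R N]
    (f : MultilinearMap R (fun _ : ι => M) N) {S : Set M}
    (hf : ∀ m i, m i ∈ S → f m = 0) {s : ι → M} (hs : ∀ i, s i ∈ S) (b : ι → M) :
    f (s + b) = f b := by
  classical
  rw [f.map_add_univ, Finset.sum_eq_single_of_mem ∅ (Finset.mem_univ _), Finset.piecewise_empty]
  intro t _ ht
  obtain ⟨i, hi⟩ := Finset.nonempty_iff_ne_empty.mpr ht
  exact hf _ i (by rw [Finset.piecewise_eq_of_mem _ _ _ hi]; exact hs i)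

theorem MultilinearMap.map_involutive_eq_neg_one_pow_smul {𝕜 ι M N : Type*} [Field 𝕜]
    [NeZero (2 : 𝕜)] [Fintype ι] [AddCommGroup M] [Module 𝕜 M] [AddCommGroup N] [Module 𝕜 N]
    (f : MultilinearMap 𝕜 (fun _ : ι => M) N) {σ : M →ₗ[𝕜] M} (hσ : Function.Involutive σ)
    (hf : ∀ m i, σ (m i) = m i → f m = 0) (m : ι → M) :
    f (fun i => σ (m i)) = (-1 : 𝕜) ^ Fintype.card ι • f m := by
  set s : ι → M := fun i => (2 : 𝕜)⁻¹ • (m i + σ (m i))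
  set a : ι → M := fun i => (2 : 𝕜)⁻¹ • (m i - σ (m i))
  have hs : ∀ i, s i ∈ {v | σ v = v} := fun i => by
    simp only [s, Set.mem_ofPred_eq, map_smul, map_add, hσ (m i), add_comm]
  have hm : m = s + a := by
    funext i
    simp only [s, a, Pi.add_apply]
    match_scalars <;> field_simp <;> ring
  have hσm : (fun i => σ (m i)) = s + fun i => (-1 : 𝕜) • a i := by
    funext i
    simp only [s, a, Pi.add_apply]
    match_scalars <;> field_simp <;> ring
  rw [hσm, f.map_add_eq_of_forall_mem hf hs, f.map_smul_univ, hm, f.map_add_eq_of_forall_mem hf hs]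
  simp

section

variable {E V W : Type*} [NormedAddCommGroup E] [NormedSpace ℝ E] [NormedAddCommGroup V]
  [NormedSpace ℝ V] [NormedAddCommGroup W] [NormedSpace ℝ W]

theorem iteratedFDeriv_succ_apply_snoc {n : ℕ} {f : E → W} (hf : ContDiff ℝ (n + 1) f) (x : E)
    (m : Fin n → E) (v : E) :
    iteratedFDeriv ℝ (n + 1) f x (snoc m v) = iteratedFDeriv ℝ n (fun y => fderiv ℝ f y v) x m := by
  have h := (ContinuousLinearMap.apply ℝ W v).iteratedFDeriv_comp_left
    (hf.fderiv_right le_rfl).contDiffAt (x := x) (i := n) le_rfl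
  rw [iteratedFDeriv_succ_apply_right, init_snoc, snoc_last]
  exact (congrArg (· m) h).symm

theorem iteratedFDeriv_apply_snoc_snoc_comm {n : ℕ} {f : E → W} (hf : ContDiff ℝ (n + 2) f)
    (x : E) (m : Fin n → E) (a b : E) :
    iteratedFDeriv ℝ (n + 2) f x (snoc (snoc m a) b)
      = iteratedFDeriv ℝ (n + 2) f x (snoc (snoc m b) a) := by
  have hf' : ∀ v, ContDiff ℝ (n + 1) (fun y => fderiv ℝ f y v) := fun v =>
    (ContinuousLinearMap.apply ℝ W v).contDiff.comp (hf.fderiv_right le_rfl)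
  have hsymm : ∀ y,
      fderiv ℝ (fun z => fderiv ℝ f z b) y a = fderiv ℝ (fun z => fderiv ℝ f z a) y b := by
    intro y
    have hd := (hf.fderiv_right (m := 1) (by norm_cast; omega)).differentiable one_ne_zero y
    rw [fderiv_clm_apply hd (differentiableAt_const _),
      fderiv_clm_apply hd (differentiableAt_const _)]
    simpa using ((hf.contDiffAt.isSymmSndFDerivAt (by simp)).eq a b)
  rw [iteratedFDeriv_succ_apply_snoc hf, iteratedFDeriv_succ_apply_snoc (hf' b),
    iteratedFDeriv_succ_apply_snoc hf, iteratedFDeriv_succ_apply_snoc (hf' a)]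
  simp only [hsymm]

theorem fderiv_apply_diag_eq_zero_s6 {Φ : V × V → W} {x : V} (hΦ : DifferentiableAt ℝ Φ (x, x))
    (h0 : ∀ y, Φ (y, y) = 0) (u : V) : fderiv ℝ Φ (x, x) (u, u) = 0 := by
  have hdiag := hΦ.hasFDerivAt.comp (f := fun y : V => (y, y)) x
    ((hasFDerivAt_id x).prodMk (hasFDerivAt_id x))
  simp only [Function.comp_def, h0] at hdiag
  simpa using congrArg (· u) (hdiag.unique (hasFDerivAt_const 0 x))

theorem iteratedFDeriv_succ_apply_eq_zero_of_diag {k : ℕ} {F : V × V → W}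
    (hF : ContDiff ℝ (k + 1) F) (hk : ∀ y : V, iteratedFDeriv ℝ k F (y, y) = 0) (x : V)
    {m : Fin (k + 1) → V × V} {i : Fin (k + 1)} {u : V} (hm : m i = (u, u)) :
    iteratedFDeriv ℝ (k + 1) F (x, x) m = 0 := by
  induction k generalizing F with
  | zero =>
    rw [Fin.eq_zero i] at hm
    rw [iteratedFDeriv_one_apply, hm]
    refine fderiv_apply_diag_eq_zero_s6 (hF.differentiable one_ne_zero _) (fun y => ?_) u
    simpa using congrArg (· 0) (hk y)
  | succ k ih =>
    have h_ne_last : ∀ (m : Fin (k + 2) → V × V) (i : Fin (k + 2)), i ≠ last (k + 1) →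
        m i = (u, u) → iteratedFDeriv ℝ (k + 2) F (x, x) m = 0 := by
      intro m i hi hm
      rw [← snoc_init_self m, iteratedFDeriv_succ_apply_snoc hF]
      have hg : ContDiff ℝ (k + 1) (fun y => fderiv ℝ F y (m (last (k + 1)))) := by
        exact_mod_cast (ContinuousLinearMap.apply ℝ W _).contDiff.comp (hF.fderiv_right le_rfl)
      have hgk : ∀ y : V,
          iteratedFDeriv ℝ k (fun y => fderiv ℝ F y (m (last (k + 1)))) (y, y) = 0 := by
        intro y
        ext n
        rw [← iteratedFDeriv_succ_apply_snoc (hF.of_le (by norm_cast; omega)), hk]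
        rfl
      have hmi : init m (i.castPred hi) = (u, u) := by rwa [init, castSucc_castPred]
      exact ih hg hgk hmi
    by_cases hi : i = last (k + 1)
    · -- the induction hypothesis does not reach the last slot; exchange it with the one before
      subst hi
      rw [← snoc_init_self m, ← snoc_init_self (init m),
        iteratedFDeriv_apply_snoc_snoc_comm (by exact_mod_cast hF)]
      refine h_ne_last _ (castSucc (last k)) (castSucc_lt_last _).ne ?_
      rw [snoc_castSucc, snoc_last, hm]
    · exact h_ne_last m i hi hm

def IsContrastFunction (k : ℕ) (F : V × V → W) : Prop :=
  ∀ x : V, ∀ j ≤ k, iteratedFDeriv ℝ j F (x, x) = 0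

theorem IsContrastFunction.add_neg_one_pow_smul_comp_swap {k : ℕ} {F : V × V → W}
    (hF : ContDiff ℝ (k + 1) F) (h : IsContrastFunction k F) :
    IsContrastFunction (k + 1) (fun p => F p + (-1 : ℝ) ^ k • F p.swap) := by
  intro x j hj
  set σ : V × V →L[ℝ] V × V := ↑(ContinuousLinearEquiv.prodComm ℝ V V)
  have hFj : ContDiff ℝ j F := hF.of_le (by exact_mod_cast hj)
  have hderiv : iteratedFDeriv ℝ j (fun p => F p + (-1 : ℝ) ^ k • F p.swap) (x, x)
      = iteratedFDeriv ℝ j F (x, x)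
        + (-1 : ℝ) ^ k • (iteratedFDeriv ℝ j F (x, x)).compContinuousLinearMap (fun _ => σ) := by
    change iteratedFDeriv ℝ j (F + (-1 : ℝ) ^ k • (F ∘ σ)) (x, x) = _
    have hFσ : ContDiff ℝ j ((-1 : ℝ) ^ k • (F ∘ σ)) := (hFj.comp σ.contDiff).const_smul _
    rw [iteratedFDeriv_add_apply hFj.contDiffAt hFσ.contDiffAt,
      iteratedFDeriv_const_smul_apply (hFj.comp σ.contDiff).contDiffAt,
      σ.iteratedFDeriv_comp_right hFj (x, x) le_rfl]
    rfl
  ext m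
  rw [hderiv, add_apply, smul_apply, ContinuousMultilinearMap.compContinuousLinearMap_apply]
  rcases hj.lt_or_eq with hj | rfl
  · simp [h x j (by omega)]
  · set D := iteratedFDeriv ℝ (k + 1) F (x, x)
    have hdiag : ∀ (m : Fin (k + 1) → V × V) i, σ (m i) = m i → D m = 0 := fun m i hm =>
      iteratedFDeriv_succ_apply_eq_zero_of_diag hF (fun y => h y k le_rfl) x
        (u := (m i).1) (Prod.ext rfl (congrArg Prod.fst hm))
    have hD : D (fun i => σ (m i)) = (-1 : ℝ) ^ (k + 1) • D m := by
      simpa using D.toMultilinearMap.map_involutive_eq_neg_one_pow_smul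
        (σ := (σ : V × V →ₗ[ℝ] V × V)) Prod.swap_swap hdiag m
    rw [hD, smul_smul, ← pow_add, Odd.neg_one_pow ⟨k, by ring⟩, neg_one_smul, add_neg_cancel]
    rfl

end

/-- If `F : V × V → ℝ` is a contrast function of degree `k` (all iterated Fréchet
derivatives of order `≤ k` vanish on the diagonal), then
`G = F + (−1)^k · F ∘ inv`, with `inv(x,y) = (y,x)`, is a contrast function of
degree `k + 1`. -/
theorem contrast_degree_succ_of_add_inv
    {V : Type*} [NormedAddCommGroup V] [NormedSpace ℝ V]
    (k : ℕ) (F : V × V → ℝ) (hF : ContDiff ℝ (⊤ : ℕ∞) F)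
    (hvanish : ∀ x : V, ∀ j ≤ k, iteratedFDeriv ℝ j F (x, x) = 0) :
    ∀ x : V, ∀ j ≤ k + 1,
      iteratedFDeriv ℝ j (fun p : V × V => F p + (-1 : ℝ) ^ k * F (p.2, p.1)) (x, x) = 0 :=
  IsContrastFunction.add_neg_one_pow_smul_comp_swap (hF.of_le (by exact_mod_cast le_top)) hvanish
end

section
/- Let V be a real normed vector space and let F : V × V → ℝ be a contrast function. Define g^F(x)(u,v) := D²F(x,x)((0,u),(0,v)), Γ^F(x)(u,v,w) := −D³F(x,x)((0,u),(0,v),(w,0)), and Γ^{F,*}(x)(u,v,w) := −D³F(x,x)((u,0),(v,0),(0,w)). Then the duality relation holds: for all x, u, v, w ∈ V, the derivative at t = 0 of the real function t ↦ g^F(x + t·u)(v,w) equals Γ^F(x)(u,v,w) + Γ^{F,*}(x)(u,w,v). -/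
/-!
Write `T` for the third derivative of `F` at `(x, x)`; it is symmetric in its last two slots
(symmetry of second derivatives). Differentiating `z ↦ DF(z, z) = 0` twice along the diagonal
gives `T((u, u), (w, w), ·) = 0`. The left-hand side is `T((u, u), (0, v), (0, w))`, and splitting
`(u, u) = (u, 0) + (0, u)` and `(w, w) = (w, 0) + (0, w)` in this vanishing identity yields the
relation.
-/

open ContinuousLinearMap

section ThirdDerivative

variable {𝕜 : Type*} [NontriviallyNormedField 𝕜]
  {E G H V : Type*} [NormedAddCommGroup E] [NormedSpace 𝕜 E]
  [NormedAddCommGroup G] [NormedSpace 𝕜 G] [NormedAddCommGroup H] [NormedSpace 𝕜 H]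
  [NormedAddCommGroup V] [NormedSpace 𝕜 V]

theorem iteratedFDeriv_three_apply (f : E → G) (z : E) (m : Fin 3 → E) :
    iteratedFDeriv 𝕜 3 f z m = fderiv 𝕜 (fderiv 𝕜 (fderiv 𝕜 f)) z (m 0) (m 1) (m 2) := by
  rw [iteratedFDeriv_succ_apply_right, iteratedFDeriv_two_apply]
  rfl

theorem ContDiff.differentiable_fderiv_fderiv {f : E → G} (hf : ContDiff 𝕜 3 f) :
    Differentiable 𝕜 (fderiv 𝕜 (fderiv 𝕜 f)) :=
  ((hf.fderiv_right (m := 2) (by norm_num)).fderiv_right (m := 1) (by norm_num)).differentiable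
    one_ne_zero

theorem HasFDerivAt.clm_apply_const {D : E → G →L[𝕜] H} {D' : E →L[𝕜] G →L[𝕜] H} {y : E}
    (hD : HasFDerivAt D D' y) (p : G) : HasFDerivAt (fun z => D z p) (D'.flip p) y := by
  simpa using hD.clm_apply (hasFDerivAt_const p y)

theorem fderiv_apply_map_eq_zero_of_forall_map_eq_zero {φ : E → H} (L : V →L[𝕜] E) {z : V}
    (hφ : DifferentiableAt 𝕜 φ (L z)) (h : ∀ y, φ (L y) = 0) (p : V) :
    fderiv 𝕜 φ (L z) (L p) = 0 := by
  have hcomp : fderiv 𝕜 (φ ∘ L) z = (fderiv 𝕜 φ (L z)).comp L := by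
    rw [fderiv_comp z hφ L.differentiableAt, L.fderiv]
  have hzero : φ ∘ L = fun _ => 0 := funext h
  simpa [hzero] using (DFunLike.congr_fun hcomp p).symm

theorem fderiv_fderiv_fderiv_apply_map_map_eq_zero {f : E → G} (hf : ContDiff 𝕜 3 f)
    (L : V →L[𝕜] E) (h : ∀ y, fderiv 𝕜 f (L y) = 0) (z p q : V) (r : E) :
    fderiv 𝕜 (fderiv 𝕜 (fderiv 𝕜 f)) (L z) (L p) (L q) r = 0 := by
  have h2 (y : V) : fderiv 𝕜 (fderiv 𝕜 f) (L y) (L q) = 0 :=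
    fderiv_apply_map_eq_zero_of_forall_map_eq_zero L
      ((hf.fderiv_right (m := 2) (by norm_num)).differentiable two_ne_zero _) h q
  have hD3 := (hf.differentiable_fderiv_fderiv (L z)).hasFDerivAt.clm_apply_const (L q)
  have h3 := fderiv_apply_map_eq_zero_of_forall_map_eq_zero L hD3.differentiableAt h2 p
  rw [hD3.fderiv] at h3
  simpa using DFunLike.congr_fun h3 r

theorem hasDerivAt_fderiv_fderiv_apply_add_smul {f : E → G} {y : E}
    (hf : DifferentiableAt 𝕜 (fderiv 𝕜 (fderiv 𝕜 f)) y) (e a b : E) :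
    HasDerivAt (fun t : 𝕜 => fderiv 𝕜 (fderiv 𝕜 f) (y + t • e) a b)
      (fderiv 𝕜 (fderiv 𝕜 (fderiv 𝕜 f)) y e a b) 0 := by
  have hline : HasDerivAt (fun t : 𝕜 => y + t • e) e 0 := by
    simpa using ((hasDerivAt_id (0 : 𝕜)).smul_const e).const_add y
  have hcurve := HasFDerivAt.comp_hasDerivAt_of_eq (l := fderiv 𝕜 (fderiv 𝕜 f)) (0 : 𝕜)
    hf.hasFDerivAt hline (by simp)
  simpa using (hcurve.clm_apply (hasDerivAt_const (0 : 𝕜) a)).clm_apply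
    (hasDerivAt_const (0 : 𝕜) b)

end ThirdDerivative

theorem fderiv_fderiv_fderiv_apply_swap {𝕜 E G : Type*} [RCLike 𝕜] [NormedAddCommGroup E]
    [NormedSpace 𝕜 E] [NormedAddCommGroup G] [NormedSpace 𝕜 G] {f : E → G} (hf : ContDiff 𝕜 3 f)
    (y a b c : E) :
    fderiv 𝕜 (fderiv 𝕜 (fderiv 𝕜 f)) y a b c = fderiv 𝕜 (fderiv 𝕜 (fderiv 𝕜 f)) y a c b := by
  have hD2 := (hf.differentiable_fderiv_fderiv y).hasFDerivAt
  have hsymm : (fun z => fderiv 𝕜 (fderiv 𝕜 f) z c b) = fun z => fderiv 𝕜 (fderiv 𝕜 f) z b c :=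
    funext fun z => hf.contDiffAt.isSymmSndFDerivAt (by simp; norm_num) c b
  have hbc := (hD2.clm_apply_const b).clm_apply_const c
  have hcb := (hD2.clm_apply_const c).clm_apply_const b
  rw [hsymm] at hcb
  exact DFunLike.congr_fun (hbc.unique hcb) a

theorem contrast_duality_relation_general
    {V : Type*} [NormedAddCommGroup V] [NormedSpace ℝ V]
    (F : V × V → ℝ) (hF : ContDiff ℝ (⊤ : ℕ∞) F)
    (hdF : ∀ x : V, fderiv ℝ F (x, x) = 0)
    (x u v w : V) :
    deriv (fun t : ℝ =>
        iteratedFDeriv ℝ 2 F (x + t • u, x + t • u) ![(0, v), (0, w)]) 0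
      = -iteratedFDeriv ℝ 3 F (x, x) ![(0, u), (0, v), (w, 0)]
        + -iteratedFDeriv ℝ 3 F (x, x) ![(u, 0), (w, 0), (0, v)] := by
  have hF3 : ContDiff ℝ 3 F := hF.of_le ENat.LEInfty.out
  set T := fderiv ℝ (fderiv ℝ (fderiv ℝ F)) (x, x)
  have hlhs : deriv (fun t : ℝ =>
      iteratedFDeriv ℝ 2 F (x + t • u, x + t • u) ![(0, v), (0, w)]) 0 = T (u, u) (0, v) (0, w) := by
    simpa [iteratedFDeriv_two_apply] using (hasDerivAt_fderiv_fderiv_apply_add_smul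
      (hF3.differentiable_fderiv_fderiv (x, x)) (u, u) (0, v) (0, w)).deriv
  have hdiag : T (u, u) (w, w) (0, v) = 0 :=
    fderiv_fderiv_fderiv_apply_map_map_eq_zero hF3 ((ContinuousLinearMap.id ℝ V).prod
      (ContinuousLinearMap.id ℝ V)) hdF x u w (0, v)
  rw [fderiv_fderiv_fderiv_apply_swap hF3] at hdiag
  have hsplit_u : ((u, u) : V × V) = (u, 0) + (0, u) := by simp
  have hsplit_w : ((w, w) : V × V) = (w, 0) + (0, w) := by simp
  simp only [hsplit_u, hsplit_w, map_add, add_apply] at hdiag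
  rw [hlhs, hsplit_u, iteratedFDeriv_three_apply, iteratedFDeriv_three_apply]
  simp only [map_add, add_apply, Matrix.cons_val_zero, Matrix.cons_val_one, Matrix.cons_val_two,
    Matrix.head_cons, Matrix.tail_cons]
  rw [fderiv_fderiv_fderiv_apply_swap hF3 _ (u, 0) (w, 0)]
  linarith

/-- Duality relation for the dual connections induced by a contrast function `F` on the
pair groupoid `V × V`: with `g^F(x)(v,w) = D²F(x,x)((0,v),(0,w))`,
`Γ^F(x)(u,v,w) = −D³F(x,x)((0,u),(0,v),(w,0))` and
`Γ^{F,*}(x)(u,v,w) = −D³F(x,x)((u,0),(v,0),(0,w))`, one has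
`∂_u[g^F(·)(v,w)](x) = Γ^F(x)(u,v,w) + Γ^{F,*}(x)(u,w,v)`. -/
theorem contrast_duality_relation
    {V : Type*} [NormedAddCommGroup V] [NormedSpace ℝ V]
    (F : V × V → ℝ) (hF : ContDiff ℝ (⊤ : ℕ∞) F)
    (hF0 : ∀ x : V, F (x, x) = 0) (hdF : ∀ x : V, fderiv ℝ F (x, x) = 0)
    (x u v w : V) :
    deriv (fun t : ℝ =>
        iteratedFDeriv ℝ 2 F (x + t • u, x + t • u) ![(0, v), (0, w)]) 0
      = -iteratedFDeriv ℝ 3 F (x, x) ![(0, u), (0, v), (w, 0)]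
        + -iteratedFDeriv ℝ 3 F (x, x) ![(u, 0), (w, 0), (0, v)] :=
  contrast_duality_relation_general F hF hdF x u v w
end

section
/- Let V be a real normed vector space and let F : V × V → ℝ be a contrast function, with g^F, Γ^F, Γ^{F,*} defined as above. Then the average (1/2)(Γ^F + Γ^{F,*}) is the Levi-Civita (Koszul) form of g^F: for all x, u, v, w ∈ V, (1/2)(Γ^F(x)(u,v,w) + Γ^{F,*}(x)(u,v,w)) = (1/2)( ∂_u[g^F(·)(v,w)](x) + ∂_v[g^F(·)(u,w)](x) − ∂_w[g^F(·)(u,v)](x) ), where ∂_u[g^F(·)(v,w)](x) denotes the derivative at t = 0 of t ↦ g^F(x + t·u)(v,w). -/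
/-!
Differentiating `t ↦ D²F(x + t a, x + t a)` at `0` inserts the diagonal vector `(a, a)` into
`D³F(x, x)`, so the Koszul side is a combination of values of the symmetric form `D³F(x, x)`.
Splitting `(a, a) = (a, 0) + (0, a)`, it differs from the Christoffel side by
`D³F(x, x)((u, u), (v, v), (0, w))`, which vanishes: `DF` is zero along the whole diagonal, so
its derivatives in diagonal directions are zero as well.
-/

section Calculus

variable {𝕜 E G : Type*} [NontriviallyNormedField 𝕜] [NormedAddCommGroup E] [NormedSpace 𝕜 E]
  [NormedAddCommGroup G] [NormedSpace 𝕜 G] {f : E → G} {x y : E} {t : 𝕜} {n : ℕ}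

theorem ContDiffAt.deriv_iteratedFDeriv_add_smul_apply (hf : ContDiffAt 𝕜 (n + 1) f (x + t • y))
    (m : Fin n → E) :
    deriv (fun s : 𝕜 ↦ iteratedFDeriv 𝕜 n f (x + s • y) m) t
      = iteratedFDeriv 𝕜 (n + 1) f (x + t • y) (Fin.cons y m) := by
  have hf' : DifferentiableAt 𝕜 (iteratedFDeriv 𝕜 n f) (x + t • y) :=
    hf.differentiableAt_iteratedFDeriv (mod_cast lt_add_one n)
  rw [(hf'.continuousMultilinear_apply_const m).deriv_comp_add_smul,
    fderiv_continuousMultilinear_apply_const_apply hf', iteratedFDeriv_succ_apply_left,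
    Fin.cons_zero, Fin.tail_cons]

end Calculus

section Symmetry

variable {𝕜 E G : Type*} [RCLike 𝕜] [NormedAddCommGroup E] [NormedSpace 𝕜 E]
  [NormedAddCommGroup G] [NormedSpace 𝕜 G] {f : E → G}

theorem ContDiff.iteratedFDeriv_three_apply_swap₀₁ (hf : ContDiff 𝕜 3 f) (x a b c : E) :
    iteratedFDeriv 𝕜 3 f x ![a, b, c] = iteratedFDeriv 𝕜 3 f x ![b, a, c] := by
  have hsymm : IsSymmSndFDerivAt 𝕜 (fderiv 𝕜 f) x :=
    (hf.fderiv_right (m := 2) le_rfl).contDiffAt.isSymmSndFDerivAt (by simp)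
  simp only [iteratedFDeriv_succ_apply_right]
  exact congrArg (· c) (hsymm.eq a b)

theorem ContDiff.iteratedFDeriv_three_apply_swap₁₂ (hf : ContDiff 𝕜 3 f) (x a b c : E) :
    iteratedFDeriv 𝕜 3 f x ![a, b, c] = iteratedFDeriv 𝕜 3 f x ![a, c, b] := by
  have hd : Differentiable 𝕜 (iteratedFDeriv 𝕜 2 f) :=
    hf.differentiable_iteratedFDeriv (mod_cast Nat.lt_succ_self 2)
  have hsymm (p q z : E) : iteratedFDeriv 𝕜 2 f z ![p, q] = iteratedFDeriv 𝕜 2 f z ![q, p] :=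
    (hf.contDiffAt.isSymmSndFDerivAt (by norm_num)).iteratedFDeriv_cons
  calc iteratedFDeriv 𝕜 3 f x ![a, b, c]
      = fderiv 𝕜 (fun z ↦ iteratedFDeriv 𝕜 2 f z ![b, c]) x a :=
        (fderiv_continuousMultilinear_apply_const_apply (hd x) _ _).symm
    _ = fderiv 𝕜 (fun z ↦ iteratedFDeriv 𝕜 2 f z ![c, b]) x a := by simp_rw [hsymm b c]
    _ = iteratedFDeriv 𝕜 3 f x ![a, c, b] :=
        fderiv_continuousMultilinear_apply_const_apply (hd x) _ _

end Symmetry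

section Multilinear

variable {R M N : Type*} [Semiring R] [AddCommGroup M] [Module R M] [AddCommGroup N] [Module R N]

theorem MultilinearMap.koszul_combination_eq_of_diag_eq_zero
    (T : MultilinearMap R (fun _ : Fin 3 ↦ M × M) N)
    (swap₀₁ : ∀ a b c, T ![a, b, c] = T ![b, a, c])
    (swap₁₂ : ∀ a b c, T ![a, b, c] = T ![a, c, b])
    (diag : ∀ (a b : M) (ξ : M × M), T ![(a, a), (b, b), ξ] = 0) (u v w : M) :
    T ![(u, u), (0, v), (0, w)] + T ![(v, v), (0, u), (0, w)] - T ![(w, w), (0, u), (0, v)]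
      = -T ![(0, u), (0, v), (w, 0)] - T ![(u, 0), (v, 0), (0, w)] := by
  have add₀ (p q r s : M × M) : T ![p + q, r, s] = T ![p, r, s] + T ![q, r, s] :=
    T.cons_add ![r, s] p q
  have add₁ (p q r s : M × M) : T ![p, q + r, s] = T ![p, q, s] + T ![p, r, s] := by
    rw [swap₀₁, add₀, swap₀₁ q, swap₀₁ r]
  have split (a : M) : ((a, a) : M × M) = (a, 0) + (0, a) := by simp
  have hdiag := diag u v (0, w)
  rw [split u, split v, add₀, add₁, add₁] at hdiag
  rw [split u, split v, split w, add₀, add₀, add₀, swap₀₁ (v, 0), swap₀₁ (0, v), swap₀₁ (w, 0),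
    swap₁₂ (0, u) (w, 0), swap₀₁ (0, w), swap₁₂ (0, u) (0, w)]
  linear_combination (norm := abel) hdiag

end Multilinear

section Contrast

variable {V : Type*} [NormedAddCommGroup V] [NormedSpace ℝ V] {F : V × V → ℝ} {n : ℕ}

theorem ContDiff.deriv_iteratedFDeriv_apply_diag (hF : ContDiff ℝ (n + 1) F) (x a : V)
    (m : Fin n → V × V) :
    deriv (fun t : ℝ ↦ iteratedFDeriv ℝ n F (x + t • a, x + t • a) m) 0
      = iteratedFDeriv ℝ (n + 1) F (x, x) (Matrix.vecCons (a, a) m) := by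
  have h := (hF.contDiffAt (x := (x, x) + (0 : ℝ) • (a, a))).deriv_iteratedFDeriv_add_smul_apply m
  simp only [Prod.smul_mk, Prod.mk_add_mk, zero_smul, add_zero] at h
  exact h

theorem iteratedFDeriv_two_apply_diag_eq_zero (hF : ContDiff ℝ 2 F)
    (hdF : ∀ x : V, fderiv ℝ F (x, x) = 0) (x a : V) (ξ : V × V) :
    iteratedFDeriv ℝ 2 F (x, x) ![(a, a), ξ] = 0 := by
  have h := hF.deriv_iteratedFDeriv_apply_diag x a ![ξ]
  simp only [iteratedFDeriv_one_apply, hdF, zero_apply, deriv_const] at h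
  exact h.symm

theorem iteratedFDeriv_three_apply_diag_diag_eq_zero (hF : ContDiff ℝ 3 F)
    (hdF : ∀ x : V, fderiv ℝ F (x, x) = 0) (x a b : V) (ξ : V × V) :
    iteratedFDeriv ℝ 3 F (x, x) ![(a, a), (b, b), ξ] = 0 := by
  have h := hF.deriv_iteratedFDeriv_apply_diag x a ![(b, b), ξ]
  simp only [iteratedFDeriv_two_apply_diag_eq_zero (hF.of_le (by norm_num)) hdF, deriv_const] at h
  exact h.symm

end Contrast

theorem contrast_levi_civita_koszul_general
    {V : Type*} [NormedAddCommGroup V] [NormedSpace ℝ V]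
    (F : V × V → ℝ) (hF : ContDiff ℝ (⊤ : ℕ∞) F)
    (hdF : ∀ x : V, fderiv ℝ F (x, x) = 0)
    (x u v w : V) :
    (1 / 2 : ℝ) * (-iteratedFDeriv ℝ 3 F (x, x) ![(0, u), (0, v), (w, 0)]
        + -iteratedFDeriv ℝ 3 F (x, x) ![(u, 0), (v, 0), (0, w)])
      = (1 / 2 : ℝ) *
        (deriv (fun t : ℝ =>
            iteratedFDeriv ℝ 2 F (x + t • u, x + t • u) ![(0, v), (0, w)]) 0
          + deriv (fun t : ℝ =>
            iteratedFDeriv ℝ 2 F (x + t • v, x + t • v) ![(0, u), (0, w)]) 0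
          - deriv (fun t : ℝ =>
            iteratedFDeriv ℝ 2 F (x + t • w, x + t • w) ![(0, u), (0, v)]) 0) := by
  have hF3 : ContDiff ℝ 3 F := hF.of_le (WithTop.coe_le_coe.mpr le_top)
  have hK := (iteratedFDeriv ℝ 3 F (x, x)).toMultilinearMap.koszul_combination_eq_of_diag_eq_zero
    (hF3.iteratedFDeriv_three_apply_swap₀₁ (x, x)) (hF3.iteratedFDeriv_three_apply_swap₁₂ (x, x))
    (iteratedFDeriv_three_apply_diag_diag_eq_zero hF3 hdF x) u v w
  rw [hF3.deriv_iteratedFDeriv_apply_diag, hF3.deriv_iteratedFDeriv_apply_diag,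
    hF3.deriv_iteratedFDeriv_apply_diag]
  simp only [ContinuousMultilinearMap.coe_coe] at hK
  rw [hK]
  ring

/-- The average of the two dual Christoffel forms induced by a contrast function `F` on
the pair groupoid `V × V` is the Levi-Civita (Koszul) form of the metric
`g^F(x)(u,v) = D²F(x,x)((0,u),(0,v))`, where
`Γ^F(x)(u,v,w) = −D³F(x,x)((0,u),(0,v),(w,0))` and
`Γ^{F,*}(x)(u,v,w) = −D³F(x,x)((u,0),(v,0),(0,w))`. -/
theorem contrast_levi_civita_koszul
    {V : Type*} [NormedAddCommGroup V] [NormedSpace ℝ V]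
    (F : V × V → ℝ) (hF : ContDiff ℝ (⊤ : ℕ∞) F)
    (hF0 : ∀ x : V, F (x, x) = 0) (hdF : ∀ x : V, fderiv ℝ F (x, x) = 0)
    (x u v w : V) :
    (1 / 2 : ℝ) * (-iteratedFDeriv ℝ 3 F (x, x) ![(0, u), (0, v), (w, 0)]
        + -iteratedFDeriv ℝ 3 F (x, x) ![(u, 0), (v, 0), (0, w)])
      = (1 / 2 : ℝ) *
        (deriv (fun t : ℝ =>
            iteratedFDeriv ℝ 2 F (x + t • u, x + t • u) ![(0, v), (0, w)]) 0
          + deriv (fun t : ℝ =>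
            iteratedFDeriv ℝ 2 F (x + t • v, x + t • v) ![(0, u), (0, w)]) 0
          - deriv (fun t : ℝ =>
            iteratedFDeriv ℝ 2 F (x + t • w, x + t • w) ![(0, u), (0, v)]) 0) :=
  contrast_levi_civita_koszul_general F hF hdF x u v w
end

section
/- Let V be a real normed vector space and let F : V × V → ℝ be a contrast function, with Γ^F and Γ^{F,*} defined as above. Define the three-tensor T^F(x)(u,v,w) := Γ^F(x)(u,v,w) − Γ^{F,*}(x)(u,v,w). Then for all x, u, v, w ∈ V one has T^F(x)(u,v,w) = D³(F − F*)(x,x)((0,u),(0,v),(0,w)), where F*(x,y) = F(y,x), and T^F(x) is a totally symmetric trilinear form: its value is unchanged under every permutation of the arguments u, v, w. In particular, if F = F* then T^F = 0. -/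
/-- The skewness tensor `T^F = Γ^F − Γ^{F,*}` of a contrast function `F` on the pair
groupoid `V × V`, where `Γ^F(x)(u,v,w) = −D³F(x,x)((0,u),(0,v),(w,0))` and
`Γ^{F,*}(x)(u,v,w) = −D³F(x,x)((u,0),(v,0),(0,w))`. -/
noncomputable def contrastT {V : Type*} [NormedAddCommGroup V] [NormedSpace ℝ V]
    (F : V × V → ℝ) (x u v w : V) : ℝ :=
  -iteratedFDeriv ℝ 3 F (x, x) ![(0, u), (0, v), (w, 0)]
    - -iteratedFDeriv ℝ 3 F (x, x) ![(u, 0), (v, 0), (0, w)]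

/-!
Write `A = D³F(x,x)`, `P_u = (u,0)` and `Q_u = (0,u)`. Differentiating `y ↦ DF(y,y) = 0` twice gives
`A((a,a),(b,b),h) = 0`. Expanding `(a,a) = P_a + Q_a` and using the symmetry of `A`, four of these
identities combine to `T^F = A(Q,Q,Q) − A(P,P,P)`, which is `D³(F − F*)(x,x)(Q,Q,Q)` since `F*`
exchanges `P` and `Q`. Total symmetry of `T^F` is then the symmetry of the third derivative of
`F − F*`.
-/

open Equiv

theorem apply_comp_perm_of_apply_comp_swap_castSucc_succ {α β : Type*} {n : ℕ}
    (g : (Fin (n + 1) → α) → β)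
    (hg : ∀ (i : Fin n) (m : Fin (n + 1) → α), g (m ∘ swap i.castSucc i.succ) = g m)
    (σ : Perm (Fin (n + 1))) (m : Fin (n + 1) → α) : g (m ∘ σ) = g m := by
  have hσ : σ ∈ Submonoid.closure (Set.range fun i : Fin n ↦ swap i.castSucc i.succ) := by
    rw [Perm.mclosure_swap_castSucc_succ]; trivial
  induction hσ using Submonoid.closure_induction generalizing m with
  | mem _ hτ => obtain ⟨i, rfl⟩ := hτ; exact hg i m
  | one => rfl
  | mul τ ρ _ _ hτ hρ => exact (hρ (m ∘ τ)).trans (hτ m)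

section ThirdDerivative

variable {E F : Type*} [NormedAddCommGroup E] [NormedSpace ℝ E]
  [NormedAddCommGroup F] [NormedSpace ℝ F] {f : E → F}

theorem iteratedFDeriv_three_apply_eq_iteratedFDeriv_two_fderiv (x a b c : E) :
    iteratedFDeriv ℝ 3 f x ![a, b, c] = iteratedFDeriv ℝ 2 (fderiv ℝ f) x ![a, b] c := by
  rw [iteratedFDeriv_succ_apply_right]
  congr 2
  ext i; fin_cases i <;> rfl

theorem ContDiff.iteratedFDeriv_three_swap_left (hf : ContDiff ℝ 3 f) (x a b c : E) :
    iteratedFDeriv ℝ 3 f x ![b, a, c] = iteratedFDeriv ℝ 3 f x ![a, b, c] := by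
  have hsymm : IsSymmSndFDerivAt ℝ (fderiv ℝ f) x :=
    (hf.fderiv_right (m := 2) le_rfl).contDiffAt.isSymmSndFDerivAt (by simp)
  simp only [iteratedFDeriv_three_apply_eq_iteratedFDeriv_two_fderiv]
  exact congrArg (· c) hsymm.iteratedFDeriv_cons

theorem ContDiff.iteratedFDeriv_three_swap_right (hf : ContDiff ℝ 3 f) (x a b c : E) :
    iteratedFDeriv ℝ 3 f x ![a, c, b] = iteratedFDeriv ℝ 3 f x ![a, b, c] := by
  have hsymm (y : E) : iteratedFDeriv ℝ 2 f y ![c, b] = iteratedFDeriv ℝ 2 f y ![b, c] :=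
    (hf.contDiffAt.isSymmSndFDerivAt (by norm_num)).iteratedFDeriv_cons
  have hdiff := hf.differentiable_iteratedFDeriv (m := 2) (by norm_num) x
  calc iteratedFDeriv ℝ 3 f x ![a, c, b]
      = fderiv ℝ (fun y ↦ iteratedFDeriv ℝ 2 f y ![c, b]) x a :=
        fderiv_continuousMultilinear_apply_const_apply hdiff _ _ |>.symm
    _ = fderiv ℝ (fun y ↦ iteratedFDeriv ℝ 2 f y ![b, c]) x a := by simp only [hsymm]
    _ = iteratedFDeriv ℝ 3 f x ![a, b, c] :=
        fderiv_continuousMultilinear_apply_const_apply hdiff _ _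

theorem ContDiff.iteratedFDeriv_three_comp_perm (hf : ContDiff ℝ 3 f) (x : E)
    (σ : Perm (Fin 3)) (m : Fin 3 → E) :
    iteratedFDeriv ℝ 3 f x (m ∘ σ) = iteratedFDeriv ℝ 3 f x m := by
  refine apply_comp_perm_of_apply_comp_swap_castSucc_succ _ (fun i m ↦ ?_) σ m
  have hm : m = ![m 0, m 1, m 2] := by ext j; fin_cases j <;> rfl
  fin_cases i
  · rw [hm]; convert hf.iteratedFDeriv_three_swap_left x (m 0) (m 1) (m 2) using 2
    ext j; fin_cases j <;> rfl
  · rw [hm]; convert hf.iteratedFDeriv_three_swap_right x (m 0) (m 1) (m 2) using 2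
    ext j; fin_cases j <;> rfl

end ThirdDerivative

theorem MultilinearMap.map_inl_inl_inr_sub_map_inr_inr_inl {R M N : Type*} [CommSemiring R]
    [AddCommMonoid M] [Module R M] [AddCommGroup N] [Module R N]
    (A : MultilinearMap R (fun _ : Fin 3 ↦ M × M) N)
    (hrot : ∀ p q r, A ![q, r, p] = A ![p, q, r])
    (hdiag : ∀ a b h, A ![(a, a), (b, b), h] = 0) (u v w : M) :
    A ![(u, 0), (v, 0), (0, w)] - A ![(0, u), (0, v), (w, 0)]
      = A ![(0, u), (0, v), (0, w)] - A ![(u, 0), (v, 0), (w, 0)] := by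
  have rot2 (p q r) : A ![r, p, q] = A ![p, q, r] := (hrot q r p).trans (hrot p q r)
  have add0 (p p' q r) : A ![p + p', q, r] = A ![p, q, r] + A ![p', q, r] := A.cons_add _ _ _
  have add1 (p q q' r) : A ![p, q + q', r] = A ![p, q, r] + A ![p, q', r] := by
    rw [← hrot p (q + q') r, add0, hrot p q r, hrot p q' r]
  have add2 (p q r r') : A ![p, q, r + r'] = A ![p, q, r] + A ![p, q, r'] := by
    rw [← rot2 p q (r + r'), add0, rot2 p q r, rot2 p q r']
  have hdiag' (a b h) : A ![(a, 0) + (0, a), (b, 0) + (0, b), h] = 0 := by simpa using hdiag a b h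
  have e1 := hdiag' u v (w, 0)
  have e2 := hdiag' u v (0, w)
  have e3 : A ![(w, 0) + (0, w), (u, 0) + (0, u), (v, 0)] = 0 := hdiag' w u (v, 0)
  have e4 : A ![(v, 0) + (0, v), (w, 0) + (0, w), (u, 0)] = 0 := hdiag' v w (u, 0)
  rw [rot2] at e3
  rw [hrot] at e4
  simp only [add0, add1, add2] at e1 e2 e3 e4
  linear_combination (norm := abel) e3 + e4 - e1 - e2

theorem iteratedFDeriv_comp_continuousLinearMap_eq_zero {𝕜 E F G : Type*}
    [NontriviallyNormedField 𝕜] [NormedAddCommGroup E] [NormedSpace 𝕜 E]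
    [NormedAddCommGroup F] [NormedSpace 𝕜 F] [NormedAddCommGroup G] [NormedSpace 𝕜 G] {n : WithTop ℕ∞} {g : E → F} (L : G →L[𝕜] E)
    (hg : ContDiff 𝕜 n g) (hgL : ∀ y, g (L y) = 0) {i : ℕ} (hi : i ≤ n) (y : G) (m : Fin i → G) :
    iteratedFDeriv 𝕜 i g (L y) (fun j ↦ L (m j)) = 0 := by
  have hcomp : g ∘ L = 0 := funext hgL
  have := congrArg (· m) (L.iteratedFDeriv_comp_right hg y hi)
  simpa [hcomp, iteratedFDeriv_fun_zero] using this.symm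

theorem iteratedFDeriv_comp_swap_apply_s9 {𝕜 E E' F : Type*} [NontriviallyNormedField 𝕜]
    [NormedAddCommGroup E] [NormedSpace 𝕜 E] [NormedAddCommGroup E'] [NormedSpace 𝕜 E']
    [NormedAddCommGroup F] [NormedSpace 𝕜 F] {n : WithTop ℕ∞} {f : E' × E → F}
    (hf : ContDiff 𝕜 n f) {i : ℕ} (hi : i ≤ n) (p : E × E') (m : Fin i → E × E') :
    iteratedFDeriv 𝕜 i (fun q : E × E' ↦ f (q.2, q.1)) p m
      = iteratedFDeriv 𝕜 i f (p.2, p.1) (fun j ↦ ((m j).2, (m j).1)) :=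
  congrArg (· m) <|
    (ContinuousLinearEquiv.prodComm 𝕜 E E').toContinuousLinearMap.iteratedFDeriv_comp_right hf p hi

section Contrast

variable {V : Type*} [NormedAddCommGroup V] [NormedSpace ℝ V] {F : V × V → ℝ}

theorem iteratedFDeriv_three_diag_diag_eq_zero (hF : ContDiff ℝ 3 F)
    (hdF : ∀ x : V, fderiv ℝ F (x, x) = 0) (x a b : V) (h : V × V) :
    iteratedFDeriv ℝ 3 F (x, x) ![(a, a), (b, b), h] = 0 := by
  let diag : V →L[ℝ] V × V := .prod (.id ℝ V) (.id ℝ V)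
  have hvec : ![(a, a), (b, b)] = fun j ↦ diag (![a, b] j) := by funext j; fin_cases j <;> rfl
  rw [iteratedFDeriv_three_apply_eq_iteratedFDeriv_two_fderiv, hvec,
    show ((x, x) : V × V) = diag x from rfl,
    iteratedFDeriv_comp_continuousLinearMap_eq_zero diag (hF.fderiv_right le_rfl) hdF le_rfl x,
    zero_apply]

theorem contrastT_eq_iteratedFDeriv_inr_sub_inl (hF : ContDiff ℝ 3 F)
    (hdF : ∀ x : V, fderiv ℝ F (x, x) = 0) (x u v w : V) :
    contrastT F x u v w
      = iteratedFDeriv ℝ 3 F (x, x) ![(0, u), (0, v), (0, w)]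
        - iteratedFDeriv ℝ 3 F (x, x) ![(u, 0), (v, 0), (w, 0)] := by
  have hrot (p q r : V × V) :
      iteratedFDeriv ℝ 3 F (x, x) ![q, r, p] = iteratedFDeriv ℝ 3 F (x, x) ![p, q, r] := by
    convert hF.iteratedFDeriv_three_comp_perm (x, x) (finRotate 3) ![p, q, r] using 2
    funext i; fin_cases i <;> rfl
  have key := (iteratedFDeriv ℝ 3 F (x, x)).toMultilinearMap.map_inl_inl_inr_sub_map_inr_inr_inl
    hrot (iteratedFDeriv_three_diag_diag_eq_zero hF hdF x) u v w
  simp only [ContinuousMultilinearMap.coe_coe] at key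
  rw [contrastT, ← key]
  ring

theorem iteratedFDeriv_sub_swap_inr (hF : ContDiff ℝ 3 F) (x u v w : V) :
    iteratedFDeriv ℝ 3 (fun p : V × V ↦ F p - F (p.2, p.1)) (x, x) ![(0, u), (0, v), (0, w)]
      = iteratedFDeriv ℝ 3 F (x, x) ![(0, u), (0, v), (0, w)]
        - iteratedFDeriv ℝ 3 F (x, x) ![(u, 0), (v, 0), (w, 0)] := by
  have hswap : ContDiff ℝ 3 (fun p : V × V ↦ F (p.2, p.1)) :=
    hF.comp (contDiff_snd.prodMk contDiff_fst)
  rw [show (fun p : V × V ↦ F p - F (p.2, p.1)) = F - fun p ↦ F (p.2, p.1) from rfl,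
    iteratedFDeriv_sub_apply hF.contDiffAt hswap.contDiffAt,
    sub_apply, iteratedFDeriv_comp_swap_apply_s9 hF le_rfl]
  congr 3
  funext i; fin_cases i <;> rfl

theorem contrastT_eq_iteratedFDeriv_sub_swap (hF : ContDiff ℝ 3 F)
    (hdF : ∀ x : V, fderiv ℝ F (x, x) = 0) (x u v w : V) :
    contrastT F x u v w
      = iteratedFDeriv ℝ 3 (fun p : V × V ↦ F p - F (p.2, p.1)) (x, x)
          ![(0, u), (0, v), (0, w)] := by
  rw [contrastT_eq_iteratedFDeriv_inr_sub_inl hF hdF, iteratedFDeriv_sub_swap_inr hF]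

end Contrast

theorem contrastT_eq_and_symm_and_vanish_general
    {V : Type*} [NormedAddCommGroup V] [NormedSpace ℝ V]
    (F : V × V → ℝ) (hF : ContDiff ℝ (⊤ : ℕ∞) F)
    (hdF : ∀ x : V, fderiv ℝ F (x, x) = 0) :
    (∀ x u v w : V,
        contrastT F x u v w
          = iteratedFDeriv ℝ 3 (fun p : V × V => F p - F (p.2, p.1)) (x, x)
              ![(0, u), (0, v), (0, w)]) ∧
      (∀ (x : V) (a : Fin 3 → V) (σ : Equiv.Perm (Fin 3)),
        contrastT F x (a 0) (a 1) (a 2)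
          = contrastT F x (a (σ 0)) (a (σ 1)) (a (σ 2))) ∧
      ((∀ p : V × V, F p = F (p.2, p.1)) → ∀ x u v w : V, contrastT F x u v w = 0) := by
  have hF3 : ContDiff ℝ 3 F := hF.of_le (by norm_cast)
  have hT := contrastT_eq_iteratedFDeriv_sub_swap hF3 hdF
  refine ⟨hT, fun x a σ ↦ ?_, fun hsymm x u v w ↦ ?_⟩
  · have hG : ContDiff ℝ 3 (fun p : V × V ↦ F p - F (p.2, p.1)) :=
      hF3.sub (hF3.comp (contDiff_snd.prodMk contDiff_fst))
    have hT' (b : Fin 3 → V) : contrastT F x (b 0) (b 1) (b 2)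
        = iteratedFDeriv ℝ 3 (fun p : V × V ↦ F p - F (p.2, p.1)) (x, x) fun i ↦ (0, b i) := by
      rw [hT]; congr 1; funext i; fin_cases i <;> rfl
    rw [hT' a, ← hG.iteratedFDeriv_three_comp_perm (x, x) σ]
    exact (hT' (a ∘ σ)).symm
  · have hzero : (fun p : V × V ↦ F p - F (p.2, p.1)) = 0 :=
      funext fun p ↦ sub_eq_zero.2 (hsymm p)
    rw [hT, hzero, iteratedFDeriv_zero]
    rfl

/-- For a contrast function `F` on `V × V`: the tensor `T^F = Γ^F − Γ^{F,*}` equals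
`D³(F − F*)(x,x)((0,u),(0,v),(0,w))` with `F*(x,y) = F(y,x)`, it is totally symmetric
in `u, v, w`, and it vanishes whenever `F = F*`. -/
theorem contrastT_eq_and_symm_and_vanish
    {V : Type*} [NormedAddCommGroup V] [NormedSpace ℝ V]
    (F : V × V → ℝ) (hF : ContDiff ℝ (⊤ : ℕ∞) F)
    (hF0 : ∀ x : V, F (x, x) = 0) (hdF : ∀ x : V, fderiv ℝ F (x, x) = 0) :
    (∀ x u v w : V,
        contrastT F x u v w
          = iteratedFDeriv ℝ 3 (fun p : V × V => F p - F (p.2, p.1)) (x, x)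
              ![(0, u), (0, v), (0, w)]) ∧
      (∀ (x : V) (a : Fin 3 → V) (σ : Equiv.Perm (Fin 3)),
        contrastT F x (a 0) (a 1) (a 2)
          = contrastT F x (a (σ 0)) (a (σ 1)) (a (σ 2))) ∧
      ((∀ p : V × V, F p = F (p.2, p.1)) → ∀ x u v w : V, contrastT F x u v w = 0) :=
  contrastT_eq_and_symm_and_vanish_general F hF hdF
end

section
/- Let n ≥ 1 and for A ∈ M_n(ℝ) set F(A) := tr((1 − A)(1 − A)ᵀ), where 1 is the identity matrix and ᵀ is the transpose. Then for all X, Y ∈ M_n(ℝ), the mixed second derivative ∂²/∂s∂t [ F(exp(sX)·exp(tY)) ] evaluated at s = t = 0 equals 2·tr(X·Yᵀ). -/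
open Matrix

/-!
The inner derivative at `t = 0` is `-2 tr(P Y (1 - P)ᵀ)` with `P = exp(sX)`. Since `1 - P`
vanishes at `s = 0`, only the term in which `(1 - P)ᵀ` is differentiated survives the outer
derivative, giving `-2 tr(Y (-X)ᵀ) = 2 tr(X Yᵀ)`.
-/

attribute [local instance] Matrix.linftyOpNormedRing Matrix.linftyOpNormedAlgebra

section

variable {𝕜 m : Type*} [Fintype m] [DecidableEq m]

def contrastGL [CommRing 𝕜] (A : Matrix m m 𝕜) : 𝕜 :=
  trace ((1 - A) * (1 - A)ᵀ)

variable [RCLike 𝕜] {f : 𝕜 → Matrix m m 𝕜} {f' : Matrix m m 𝕜} {t : 𝕜}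

theorem HasDerivAt.matrix_trace (hf : HasDerivAt f f' t) :
    HasDerivAt (fun u => trace (f u)) (trace f') t :=
  (traceLinearMap m 𝕜 𝕜).toContinuousLinearMap.hasFDerivAt.comp_hasDerivAt t hf

theorem HasDerivAt.matrix_transpose (hf : HasDerivAt f f' t) :
    HasDerivAt (fun u => (f u)ᵀ) f'ᵀ t :=
  (transposeLinearEquiv m m 𝕜 𝕜).toLinearMap.toContinuousLinearMap.hasFDerivAt.comp_hasDerivAt
    t hf

theorem HasDerivAt.contrastGL (hf : HasDerivAt f f' t) :
    HasDerivAt (fun u => contrastGL (f u)) (-2 * trace (f' * (1 - f t)ᵀ)) t := by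
  have hsub := hf.const_sub 1
  refine (hsub.mul hsub.matrix_transpose).matrix_trace.congr_deriv ?_
  rw [trace_add, ← trace_transpose ((1 - f t) * (-f')ᵀ)]
  simp only [transpose_mul, transpose_transpose, neg_mul, trace_neg]
  ring

theorem hasDerivAt_exp_smul_const_zero (X : Matrix m m 𝕜) :
    HasDerivAt (fun s : 𝕜 => NormedSpace.exp (s • X)) X 0 :=
  (hasDerivAt_exp_smul_const X 0).congr_deriv (by simp)

theorem hasDerivAt_contrastGL_mul_exp_smul (P Y : Matrix m m 𝕜) :
    HasDerivAt (fun t : 𝕜 => contrastGL (P * NormedSpace.exp (t • Y)))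
      (-2 * trace (P * Y * (1 - P)ᵀ)) 0 := by
  simpa using ((hasDerivAt_exp_smul_const_zero Y).const_mul P).contrastGL

theorem hasDerivAt_trace_exp_smul_mul_one_sub_exp_smul (X Y : Matrix m m 𝕜) :
    HasDerivAt (fun s : 𝕜 => -2 * trace (NormedSpace.exp (s • X) * Y *
      (1 - NormedSpace.exp (s • X))ᵀ)) (2 * trace (X * Yᵀ)) 0 := by
  have hexp := hasDerivAt_exp_smul_const_zero X
  have hsub := hexp.const_sub 1
  refine (((hexp.mul_const Y).mul hsub.matrix_transpose).matrix_trace.const_mul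
    (-2 : 𝕜)).congr_deriv ?_
  rw [← trace_transpose (X * Yᵀ)]
  simp

end

theorem contrast_GL_metric_general (n : ℕ)
    (X Y : Matrix (Fin n) (Fin n) ℝ) :
    deriv (fun s : ℝ => deriv (fun t : ℝ =>
        Matrix.trace ((1 - NormedSpace.exp (s • X) * NormedSpace.exp (t • Y)) *
          (1 - NormedSpace.exp (s • X) * NormedSpace.exp (t • Y))ᵀ)) 0) 0
      = 2 * Matrix.trace (X * Yᵀ) := by
  have inner_deriv : (fun s : ℝ => deriv (fun t : ℝ =>
        Matrix.trace ((1 - NormedSpace.exp (s • X) * NormedSpace.exp (t • Y)) *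
          (1 - NormedSpace.exp (s • X) * NormedSpace.exp (t • Y))ᵀ)) 0)
      = fun s : ℝ => -2 * trace (NormedSpace.exp (s • X) * Y * (1 - NormedSpace.exp (s • X))ᵀ) :=
    funext fun s => (hasDerivAt_contrastGL_mul_exp_smul _ Y).deriv
  rw [inner_deriv]
  exact (hasDerivAt_trace_exp_smul_mul_one_sub_exp_smul X Y).deriv

/-- For the contrast function `F(A) = tr((1 − A)(1 − A)ᵀ)` on `GL(n, ℝ)`, the induced
metric on the Lie algebra `gl(n, ℝ)` is `g^F(X,Y) = X^L Y^L F(I) = 2 tr(X Yᵀ)`. -/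
theorem contrast_GL_metric (n : ℕ) (hn : 1 ≤ n)
    (X Y : Matrix (Fin n) (Fin n) ℝ) :
    deriv (fun s : ℝ => deriv (fun t : ℝ =>
        Matrix.trace ((1 - NormedSpace.exp (s • X) * NormedSpace.exp (t • Y)) *
          (1 - NormedSpace.exp (s • X) * NormedSpace.exp (t • Y))ᵀ)) 0) 0
      = 2 * Matrix.trace (X * Yᵀ) :=
  contrast_GL_metric_general n X Y
end

section
/- Let n ≥ 1 and for U ∈ M_n(ℂ) set F(U) := tr((1 − U)(1 − U)†), where † denotes the conjugate transpose. Then for all skew-Hermitian matrices X, Y ∈ M_n(ℂ) (i.e. X† = −X and Y† = −Y), the mixed second derivative ∂²/∂s∂t [ F(exp(sX)·exp(tY)) ] evaluated at s = t = 0 equals −2·tr(X·Y). -/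
open Matrix NormedSpace

/-! On the unitary group `F(U) = 2n - tr U - conj (tr U)`, and `exp (s • X) * exp (t • Y)` is
unitary. The mixed derivative of `tr (exp (s • X) * exp (t • Y))` at the origin is `tr (X * Y)`,
which is real when `X` and `Y` are skew-Hermitian, so the two trace terms contribute equally. -/

variable {m 𝕜 : Type*} [Fintype m] [DecidableEq m] [RCLike 𝕜]

theorem exp_mem_unitary_of_conjTranspose_eq_neg {X : Matrix m m 𝕜} (hX : Xᴴ = -X) :
    exp X ∈ unitary (Matrix m m 𝕜) := by
  rw [Unitary.mem_iff, star_eq_conjTranspose, ← exp_conjTranspose, hX,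
    ← exp_add_of_commute _ _ (Commute.refl X).neg_left,
    ← exp_add_of_commute _ _ (Commute.refl X).neg_right,
    neg_add_cancel, add_neg_cancel, exp_zero, and_self]

theorem exp_real_smul_mem_unitary_of_conjTranspose_eq_neg {X : Matrix m m 𝕜} (hX : Xᴴ = -X)
    (s : ℝ) : exp (s • X) ∈ unitary (Matrix m m 𝕜) :=
  exp_mem_unitary_of_conjTranspose_eq_neg <| by
    rw [conjTranspose_smul, hX, smul_neg, star_trivial]

theorem trace_one_sub_mul_conjTranspose_one_sub {R : Type*} [CommRing R] [StarRing R]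
    {U : Matrix m m R} (hU : U ∈ unitary (Matrix m m R)) :
    trace ((1 - U) * (1 - U)ᴴ) = 2 * Fintype.card m - trace U - star (trace U) := by
  have hUU : U * Uᴴ = 1 := Unitary.mul_star_self_of_mem hU
  rw [← trace_conjTranspose, conjTranspose_sub, conjTranspose_one, sub_mul, mul_sub, mul_sub,
    hUU]
  simp only [trace_sub, trace_one, mul_one, one_mul]
  ring

omit [DecidableEq m] in
theorem star_trace_mul_of_conjTranspose_eq_neg {R : Type*} [CommRing R] [StarRing R]
    {X Y : Matrix m m R} (hX : Xᴴ = -X) (hY : Yᴴ = -Y) :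
    star (trace (X * Y)) = trace (X * Y) := by
  rw [← trace_conjTranspose, conjTranspose_mul, hX, hY, neg_mul_neg, trace_mul_comm]

section

attribute [local instance] Matrix.linftyOpNormedRing Matrix.linftyOpNormedAlgebra

theorem hasDerivAt_trace_mul_exp_smul (A B : Matrix m m 𝕜) :
    HasDerivAt (fun t : ℝ => trace (A * exp (t • B))) (trace (A * B)) 0 := by
  have hexp := hasDerivAt_exp_smul_const' (𝕂 := ℝ) B 0
  rw [zero_smul, exp_zero, mul_one] at hexp
  exact ((traceLinearMap m ℝ 𝕜).toContinuousLinearMap.hasFDerivAt.comp_hasDerivAt 0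
    (hexp.const_mul A))

end

theorem contrast_unitary_metric_general (n : ℕ)
    (X Y : Matrix (Fin n) (Fin n) ℂ) (hX : Xᴴ = -X) (hY : Yᴴ = -Y) :
    deriv (fun s : ℝ => deriv (fun t : ℝ =>
        Matrix.trace ((1 - NormedSpace.exp (s • X) * NormedSpace.exp (t • Y)) *
          (1 - NormedSpace.exp (s • X) * NormedSpace.exp (t • Y))ᴴ)) 0) 0
      = -2 * Matrix.trace (X * Y) := by
  set a : ℝ → ℂ := fun s => trace (exp (s • X) * Y)
  have inner (s : ℝ) : HasDerivAt (fun t : ℝ =>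
      trace ((1 - exp (s • X) * exp (t • Y)) * (1 - exp (s • X) * exp (t • Y))ᴴ))
      (-a s - star (a s)) 0 := by
    have h := hasDerivAt_trace_mul_exp_smul (exp (s • X)) Y
    have hF : (fun t : ℝ =>
        trace ((1 - exp (s • X) * exp (t • Y)) * (1 - exp (s • X) * exp (t • Y))ᴴ)) =
        fun t => 2 * Fintype.card (Fin n) - trace (exp (s • X) * exp (t • Y)) -
          star (trace (exp (s • X) * exp (t • Y))) :=
      funext fun t => trace_one_sub_mul_conjTranspose_one_sub
        (mul_mem (exp_real_smul_mem_unitary_of_conjTranspose_eq_neg hX s)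
          (exp_real_smul_mem_unitary_of_conjTranspose_eq_neg hY t))
    rw [hF]
    exact (h.const_sub _).sub h.star
  have outer : HasDerivAt a (trace (Y * X)) 0 :=
    (hasDerivAt_trace_mul_exp_smul Y X).congr_of_eventuallyEq
      (Filter.Eventually.of_forall fun s => trace_mul_comm _ _)
  rw [funext fun s => (inner s).deriv]
  refine (outer.neg.sub outer.star).deriv.trans ?_
  rw [star_trace_mul_of_conjTranspose_eq_neg hY hX, trace_mul_comm Y X]
  ring

/-- For the contrast function `F(U) = tr((1 − U)(1 − U)†)` on the unitary group `U(n)`,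
the induced metric on the Lie algebra `u(n)` of skew-Hermitian matrices is
`g^F(X,Y) = X^L Y^L F(I) = −2 tr(X Y)`. -/
theorem contrast_unitary_metric (n : ℕ) (hn : 1 ≤ n)
    (X Y : Matrix (Fin n) (Fin n) ℂ) (hX : Xᴴ = -X) (hY : Yᴴ = -Y) :
    deriv (fun s : ℝ => deriv (fun t : ℝ =>
        Matrix.trace ((1 - NormedSpace.exp (s • X) * NormedSpace.exp (t • Y)) *
          (1 - NormedSpace.exp (s • X) * NormedSpace.exp (t • Y))ᴴ)) 0) 0
      = -2 * Matrix.trace (X * Y) :=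
  contrast_unitary_metric_general n X Y hX hY
end

section
/- Let H be a complex inner product space and define F(φ,ψ) := 1 − |⟨φ,ψ⟩|² / (‖φ‖²·‖ψ‖²) for nonzero φ, ψ ∈ H. Then for every nonzero φ ∈ H and every x ∈ H, the second derivative at t = 0 of the real function t ↦ F(φ + t·x, φ) equals (2·‖x‖²·‖φ‖² − 2·|⟨x,φ⟩|²) / ‖φ‖⁴. -/
open scoped InnerProductSpace

/-- The quantum contrast function `F(φ,ψ) = 1 − |⟨φ,ψ⟩|²/(‖φ‖²‖ψ‖²)` on
`(H ∖ {0}) × (H ∖ {0})`. -/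
noncomputable def quantumContrast {H : Type*} [NormedAddCommGroup H]
    [InnerProductSpace ℂ H] (φ ψ : H) : ℝ :=
  1 - ‖⟪φ, ψ⟫_ℂ‖ ^ 2 / (‖φ‖ ^ 2 * ‖ψ‖ ^ 2)

/-! The numerator of `1 − F(ψ, φ)` is the Gram determinant
`G(ψ, φ) = ‖ψ‖²‖φ‖² − |⟨ψ, φ⟩|²`, which is unchanged by adding a multiple of `φ` to `ψ` and
scales by `|c|²` under `ψ ↦ c ψ`. Hence, for small `t`,
`F(φ + t x, φ) = t² · G(x, φ) / (‖φ + t x‖²‖φ‖²)`, and the second derivative at `0` of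
`t² h(t)` is `2 h(0)`. -/

open Filter Topology

theorem iteratedDeriv_pow_mul_zero {𝕜 : Type*} [NontriviallyNormedField 𝕜] {h : 𝕜 → 𝕜}
    {n : ℕ} (hh : ContDiffAt 𝕜 n h 0) :
    iteratedDeriv n (fun t => t ^ n * h t) 0 = n.factorial * h 0 := by
  rw [iteratedDeriv_fun_mul (by fun_prop) hh, Finset.sum_eq_single_of_mem n (by simp)]
  · simp [Nat.descFactorial_self]
  · intro i hi hin
    have : n - i ≠ 0 := by grind
    simp [this]

section Gram

variable {H : Type*} [NormedAddCommGroup H] [InnerProductSpace ℂ H]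

noncomputable def gramDet (ψ φ : H) : ℝ :=
  ‖ψ‖ ^ 2 * ‖φ‖ ^ 2 - ‖⟪ψ, φ⟫_ℂ‖ ^ 2

theorem ofReal_gramDet (ψ φ : H) :
    (gramDet ψ φ : ℂ) = ⟪ψ, ψ⟫_ℂ * ⟪φ, φ⟫_ℂ - ⟪ψ, φ⟫_ℂ * ⟪φ, ψ⟫_ℂ := by
  rw [gramDet, ← inner_conj_symm φ ψ, Complex.mul_conj', inner_self_eq_norm_sq_to_K,
    inner_self_eq_norm_sq_to_K]
  simp only [RCLike.ofReal_eq_complex_ofReal]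
  push_cast
  ring

theorem gramDet_self_add_smul (φ x : H) (c : ℂ) :
    gramDet (φ + c • x) φ = ‖c‖ ^ 2 * gramDet x φ := by
  apply Complex.ofReal_injective
  push_cast
  simp only [ofReal_gramDet, inner_add_left, inner_add_right, inner_smul_left, inner_smul_right,
    ← Complex.mul_conj']
  ring

theorem quantumContrast_eq_gramDet_div {ψ φ : H} (hψ : ψ ≠ 0) (hφ : φ ≠ 0) :
    quantumContrast ψ φ = gramDet ψ φ / (‖ψ‖ ^ 2 * ‖φ‖ ^ 2) := by
  have hden : ‖ψ‖ ^ 2 * ‖φ‖ ^ 2 ≠ 0 := by positivity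
  rw [quantumContrast, gramDet, sub_div, div_self hden]

end Gram

/-- The symmetric 2-form induced by the quantum contrast function
`F(φ,ψ) = 1 − |⟨φ,ψ⟩|²/(‖φ‖²‖ψ‖²)`: the second derivative at `t = 0` of
`t ↦ F(φ + t·x, φ)` equals `(2‖x‖²‖φ‖² − 2|⟨x,φ⟩|²)/‖φ‖⁴`; after reduction this is
(a multiple of) the Fubini–Study metric on the projective space of `H`. -/
theorem quantumContrast_second_deriv {H : Type*} [NormedAddCommGroup H]
    [InnerProductSpace ℂ H] (φ x : H) (hφ : φ ≠ 0) :
    iteratedDeriv 2 (fun t : ℝ => quantumContrast (φ + t • x) φ) 0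
      = (2 * ‖x‖ ^ 2 * ‖φ‖ ^ 2 - 2 * ‖⟪x, φ⟫_ℂ‖ ^ 2) / ‖φ‖ ^ 4 := by
  have hpath : ContDiff ℝ 2 fun t : ℝ => φ + t • x := by fun_prop
  have hne : ∀ᶠ t : ℝ in 𝓝 0, φ + t • x ≠ 0 :=
    hpath.continuous.continuousAt.eventually_ne (by simpa using hφ)
  have hquot : (fun t : ℝ => quantumContrast (φ + t • x) φ) =ᶠ[𝓝 0]
      fun t => t ^ 2 * (gramDet x φ / (‖φ + t • x‖ ^ 2 * ‖φ‖ ^ 2)) := by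
    filter_upwards [hne] with t ht
    rw [quantumContrast_eq_gramDet_div ht hφ, ← Complex.coe_smul t x, gramDet_self_add_smul,
      Complex.norm_real, Real.norm_eq_abs, sq_abs, mul_div_assoc]
  have hsmooth : ContDiffAt ℝ 2 (fun t : ℝ => gramDet x φ / (‖φ + t • x‖ ^ 2 * ‖φ‖ ^ 2)) 0 :=
    contDiffAt_const.div ((hpath.contDiffAt.norm_sq ℂ).mul contDiffAt_const) (by simp [hφ])
  rw [hquot.iteratedDeriv_eq, iteratedDeriv_pow_mul_zero hsmooth, gramDet]
  simp only [zero_smul, add_zero, Nat.factorial_two, Nat.cast_ofNat]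
  field_simp
end

section
/- Let V be a real normed vector space and let F : V × V → ℝ be a contrast function which is moreover nonnegative: F(y,z) ≥ 0 for all y, z ∈ V. Then the induced symmetric bilinear form is positive semidefinite: for every x, u ∈ V, g^F(x)(u,u) = D²F(x,x)((0,u),(0,u)) ≥ 0. -/
/-!
Nonnegativity together with `F (x, x) = 0` makes every diagonal point a global minimum of `F`.
Restricting `F` to the line through `(x, x)` in direction `(0, u)` reduces the claim to the
one-variable fact that a `C²` function has nonnegative second derivative at a local minimum.
-/

open Filter Topology

theorem iteratedDeriv_comp_add_smul {𝕜 E F : Type*} [NontriviallyNormedField 𝕜]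
    [NormedAddCommGroup E] [NormedSpace 𝕜 E] [NormedAddCommGroup F] [NormedSpace 𝕜 F]
    {f : E → F} {n : ℕ} (hf : ContDiff 𝕜 n f) (x y : E) (t : 𝕜) :
    iteratedDeriv n (fun s : 𝕜 ↦ f (x + s • y)) t =
      iteratedFDeriv 𝕜 n f (x + t • y) (fun _ ↦ y) := by
  induction n generalizing t with
  | zero => simp
  | succ n ih =>
    have ih' : iteratedDeriv n (fun s : 𝕜 ↦ f (x + s • y)) =
        fun s ↦ iteratedFDeriv 𝕜 n f (x + s • y) (fun _ ↦ y) :=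
      funext (ih (hf.of_le (by norm_cast; omega)))
    rw [iteratedDeriv_succ, ih']
    exact hf.contDiffAt.deriv_fderiv_add_smul

theorem IsLocalMin.iteratedDeriv_two_nonneg {f : ℝ → ℝ} {a : ℝ} (hmin : IsLocalMin f a)
    (hf : ContinuousAt f a) : 0 ≤ iteratedDeriv 2 f a := by
  rw [iteratedDeriv_succ, iteratedDeriv_one]
  -- if `f'' a < 0`, the second-derivative test makes `a` a local maximum too, so `f` is
  -- locally constant and `f'' a = 0`
  by_contra! hneg
  have hmax : IsLocalMax f a := isLocalMax_of_deriv_deriv_neg hneg hmin.deriv_eq_zero hf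
  have hconst : f =ᶠ[𝓝 a] fun _ ↦ f a := by
    filter_upwards [hmin, hmax] with y hy₁ hy₂ using le_antisymm hy₂ hy₁
  have hderiv : deriv f =ᶠ[𝓝 a] fun _ ↦ 0 := by
    simpa using hconst.deriv
  simp [hderiv.deriv_eq] at hneg

theorem IsLocalMin.iteratedFDeriv_two_nonneg {E : Type*} [NormedAddCommGroup E]
    [NormedSpace ℝ E] {f : E → ℝ} {x : E} (hmin : IsLocalMin f x) (hf : ContDiff ℝ 2 f)
    (y : E) : 0 ≤ iteratedFDeriv ℝ 2 f x (fun _ ↦ y) := by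
  have hline : Continuous fun s : ℝ ↦ x + s • y := by fun_prop
  have hmin' : IsLocalMin (fun s : ℝ ↦ f (x + s • y)) 0 :=
    IsLocalMin.comp_continuous (by rwa [zero_smul, add_zero]) hline.continuousAt
  have h := hmin'.iteratedDeriv_two_nonneg (hf.continuous.comp hline).continuousAt
  rwa [iteratedDeriv_comp_add_smul hf, zero_smul, add_zero] at h

theorem contrast_metric_posSemidef_general
    {V : Type*} [NormedAddCommGroup V] [NormedSpace ℝ V]
    (F : V × V → ℝ) (hF : ContDiff ℝ (⊤ : ℕ∞) F)
    (hF0 : ∀ x : V, F (x, x) = 0)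
    (hnonneg : ∀ y z : V, 0 ≤ F (y, z))
    (x u : V) :
    0 ≤ iteratedFDeriv ℝ 2 F (x, x) ![(0, u), (0, u)] := by
  have hmin : IsLocalMin F (x, x) :=
    Eventually.of_forall fun p ↦ (hF0 x).trans_le (hnonneg p.1 p.2)
  have hvec : ![((0 : V), u), (0, u)] = fun _ ↦ (0, u) := by
    ext i : 1
    fin_cases i <;> rfl
  rw [hvec]
  exact hmin.iteratedFDeriv_two_nonneg (hF.of_le (WithTop.coe_le_coe.mpr le_top)) _

/-- For a nonnegative contrast function `F` on the pair groupoid `V × V`, the induced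
symmetric bilinear form `g^F(x)(u,v) = D²F(x,x)((0,u),(0,v))` is positive semidefinite. -/
theorem contrast_metric_posSemidef
    {V : Type*} [NormedAddCommGroup V] [NormedSpace ℝ V]
    (F : V × V → ℝ) (hF : ContDiff ℝ (⊤ : ℕ∞) F)
    (hF0 : ∀ x : V, F (x, x) = 0) (hdF : ∀ x : V, fderiv ℝ F (x, x) = 0)
    (hnonneg : ∀ y z : V, 0 ≤ F (y, z))
    (x u : V) :
    0 ≤ iteratedFDeriv ℝ 2 F (x, x) ![(0, u), (0, u)] :=
  contrast_metric_posSemidef_general F hF hF0 hnonneg x u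
end
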